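/- arXiv:1104.2027 — 10 statements merged into one kernel-verified Lean document; each statement's English description precedes it below -/
import Mathlib

section
/- Let B ∈ K[X] be a nonconstant Belyi polynomial and let λ ∈ K with λ ≠ 0 and v(λ) ≠ 1 (i.e. λ has non-zero additive p-adic valuation). If B(λ) ∈ {0,1}, then the degree of B is at least p. (Consequently the Belyi height ℋ(λ), the minimal degree of a Belyi polynomial mapping λ into {0,1}, satisfies ℋ(λ) ≥ p.) -/
/-!
Write a Belyi polynomial `B` of degree `n` with leading coefficient `c` as `B = c P` and
`B - 1 = c Q` with `P`, `Q` monic, and let `S` be the monic polynomial whose roots are the points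
of `B⁻¹{0, 1}`. Then `P - Q = 1 / c` and, comparing root multiplicities, `n P Q = P' S`.

After an affine change of variable through a pair of points of `B⁻¹{0, 1}` at maximal distance,
all these points are integral and two of them are at distance `1`, so `P`, `Q`, `S` and the
identity reduce to the residue field, where `n < p` keeps every multiplicity nonzero. The same
multiplicity count there shows that the reduction of `S` has either only simple roots or a single
root; the two points at distance `1` exclude the second case. Hence all points of `B⁻¹{0, 1}` are
at the same distance from each other, and for `0`, `1` and `λ` this forces `v λ = 1`.
-/

open Polynomial
open scoped Nat

def IsBelyi {F : Type*} [Field F] (B : F[X]) : Prop :=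
  B.eval 0 ∈ ({0, 1} : Set F) ∧ B.eval 1 ∈ ({0, 1} : Set F) ∧
    B.derivative ∣ B * (B - 1)

namespace Polynomial

/-- The model case: `P = B / c`, `Q = (B - 1) / c` and `S = ∏_{B t ∈ {0, 1}} (X - t)` for a
Belyi polynomial `B` of degree `n` with leading coefficient `c`. -/
structure IsBelyiTriple {R : Type*} [CommRing R] (n : ℕ) (P Q S : R[X]) : Prop where
  exists_sub_eq_C : ∃ κ, P - Q = C κ
  natCast_mul_mul_eq : C (n : R) * P * Q = derivative P * S

namespace IsBelyiTriple

variable {R R' : Type*} [CommRing R] [CommRing R'] {n : ℕ} {P Q S : R[X]}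

theorem map (h : IsBelyiTriple n P Q S) (f : R →+* R') :
    IsBelyiTriple n (P.map f) (Q.map f) (S.map f) := by
  obtain ⟨⟨κ, hκ⟩, hid⟩ := h
  refine ⟨⟨f κ, by rw [← Polynomial.map_sub, hκ, map_C]⟩, ?_⟩
  simpa [derivative_map] using congrArg (Polynomial.map f) hid

theorem of_map {f : R →+* R'} (hf : Function.Injective f)
    (h : IsBelyiTriple n (P.map f) (Q.map f) (S.map f)) : IsBelyiTriple n P Q S := by
  obtain ⟨⟨κ, hκ⟩, hid⟩ := h
  refine ⟨⟨(P - Q).coeff 0, eq_C_of_natDegree_eq_zero ?_⟩, map_injective f hf ?_⟩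
  · rw [← natDegree_map_eq_of_injective hf, Polynomial.map_sub, hκ, natDegree_C]
  · simpa [derivative_map] using hid

end IsBelyiTriple

section Field

variable {F : Type*} [Field F] {n : ℕ}

theorem natCast_ne_zero_of_factorial_ne_zero (hn : (n ! : F) ≠ 0) {j : ℕ} (hj : 0 < j)
    (hjn : j ≤ n) : (j : F) ≠ 0 := by
  obtain ⟨c, hc⟩ := Nat.dvd_factorial hj hjn
  rintro hj0
  rw [hc, Nat.cast_mul, hj0, zero_mul] at hn
  exact hn rfl

theorem rootMultiplicity_le_natDegree (P : F[X]) (t : F) :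
    P.rootMultiplicity t ≤ P.natDegree := by
  classical
  exact (count_roots P).symm.trans_le ((Multiset.count_le_card _ _).trans (card_roots' P))

theorem rootMultiplicity_derivative_add_one (hn : (n ! : F) ≠ 0) {P : F[X]} (hP0 : P ≠ 0)
    (hPn : P.natDegree ≤ n) {t : F} (ht : P.IsRoot t) :
    (derivative P).rootMultiplicity t + 1 = P.rootMultiplicity t := by
  have hpos : 0 < P.rootMultiplicity t := (rootMultiplicity_pos hP0).mpr ht
  rw [derivative_rootMultiplicity_of_root_of_mem_nonZeroDivisors ht
    (mem_nonZeroDivisors_of_ne_zero (natCast_ne_zero_of_factorial_ne_zero hn hpos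
      ((rootMultiplicity_le_natDegree P t).trans hPn)))]
  omega

namespace IsBelyiTriple

variable {P Q S : F[X]}

theorem derivative_eq (h : IsBelyiTriple n P Q S) : derivative Q = derivative P := by
  obtain ⟨κ, hκ⟩ := h.exists_sub_eq_C
  have := congrArg derivative hκ
  rwa [derivative_sub, derivative_C, sub_eq_zero, eq_comm] at this

theorem isRoot_mul_of_isRoot (h : IsBelyiTriple n P Q S) (hn : (n : F) ≠ 0) {t : F}
    (ht : S.IsRoot t) : (P * Q).IsRoot t := by
  have := congrArg (eval t) h.natCast_mul_mul_eq
  simp only [eval_mul, eval_C, ht.eq_zero, mul_zero] at this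
  simpa [IsRoot, hn, mul_assoc] using this

/-- Since `P' = Q'`, the derivative has multiplicity one less than whichever of `P`, `Q` vanishes
at `t`; when both do, their multiplicities agree. -/
theorem rootMultiplicity_eq_min_add_one (h : IsBelyiTriple n P Q S) (hn : (n ! : F) ≠ 0)
    (hPn : P.natDegree ≤ n) (hQn : Q.natDegree ≤ n) (hPQ : P * Q ≠ 0) {t : F}
    (ht : (P * Q).IsRoot t) :
    S.rootMultiplicity t = min (P.rootMultiplicity t) (Q.rootMultiplicity t) + 1 := by
  obtain ⟨hP0, hQ0⟩ := mul_ne_zero_iff.mp hPQ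
  have hP := rootMultiplicity_derivative_add_one hn hP0 hPn (t := t)
  have hQ := h.derivative_eq ▸ rootMultiplicity_derivative_add_one hn hQ0 hQn (t := t)
  have hP' := rootMultiplicity_eq_zero (p := P) (x := t)
  have hQ' := rootMultiplicity_eq_zero (p := Q) (x := t)
  have hn0 : (n : F) ≠ 0 := by
    refine natCast_ne_zero_of_factorial_ne_zero hn ?_ le_rfl
    rcases root_mul.mp ht with ht | ht
    · exact ((rootMultiplicity_pos hP0).mpr ht).trans_le
        ((rootMultiplicity_le_natDegree P t).trans hPn)
    · exact ((rootMultiplicity_pos hQ0).mpr ht).trans_le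
        ((rootMultiplicity_le_natDegree Q t).trans hQn)
  have hne : C (n : F) * P * Q ≠ 0 := mul_ne_zero (mul_ne_zero (C_ne_zero.mpr hn0) hP0) hQ0
  have hsum := congrArg (rootMultiplicity t) h.natCast_mul_mul_eq
  rw [rootMultiplicity_mul hne, rootMultiplicity_mul (left_ne_zero_of_mul hne),
    rootMultiplicity_C, zero_add, rootMultiplicity_mul (h.natCast_mul_mul_eq ▸ hne)] at hsum
  have := root_mul.mp ht
  by_cases hPt : P.IsRoot t <;> by_cases hQt : Q.IsRoot t <;> grind

theorem roots_eq_dedup [DecidableEq F] (h : IsBelyiTriple n P Q S) (hn : (n ! : F) ≠ 0)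
    (hn0 : 0 < n) (hPn : P.natDegree ≤ n) (hQn : Q.natDegree ≤ n) (hPQ : P * Q ≠ 0)
    (hne : P ≠ Q) : S.roots = (P * Q).roots.dedup := by
  have hn0' : (n : F) ≠ 0 := natCast_ne_zero_of_factorial_ne_zero hn hn0 le_rfl
  ext t
  rw [count_roots, Multiset.count_dedup]
  split_ifs with ht
  all_goals rw [mem_roots hPQ] at ht
  · have hnot_both : ¬ (P.IsRoot t ∧ Q.IsRoot t) := by
      rintro ⟨hPt, hQt⟩
      obtain ⟨κ, hκ⟩ := h.exists_sub_eq_C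
      have := congrArg (eval t) hκ
      rw [eval_sub, hPt.eq_zero, hQt.eq_zero, eval_C, sub_zero] at this
      exact hne (sub_eq_zero.mp (hκ.trans (by rw [← this, C_0])))
    rw [h.rootMultiplicity_eq_min_add_one hn hPn hQn hPQ ht]
    have := rootMultiplicity_eq_zero (p := P) (x := t)
    have := rootMultiplicity_eq_zero (p := Q) (x := t)
    grind
  · exact rootMultiplicity_eq_zero fun hSt => ht (h.isRoot_mul_of_isRoot hn0' hSt)

/-- Each root `z` of `P` is a root of `S` of multiplicity `mult_z P + 1`, and these account for
all roots of `S`; as `S` has `n + 1` roots and `P` has `n`, there is only one. -/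
theorem eq_of_mem_roots (h : IsBelyiTriple n P P S) (hn : (n ! : F) ≠ 0) (hn0 : 0 < n)
    (hP0 : P ≠ 0) (hPn : P.natDegree ≤ n) (hProots : P.roots.card = n)
    (hSroots : S.roots.card = n + 1) {x y : F} (hx : x ∈ S.roots) (hy : y ∈ S.roots) :
    x = y := by
  classical
  have hn0' : (n : F) ≠ 0 := natCast_ne_zero_of_factorial_ne_zero hn hn0 le_rfl
  have hS0 : S ≠ 0 := right_ne_zero_of_mul <| h.natCast_mul_mul_eq ▸
    mul_ne_zero (mul_ne_zero (C_ne_zero.mpr hn0') hP0) hP0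
  set Z := P.roots.toFinset
  have hsub : ∀ z ∈ S.roots, z ∈ Z := fun z hz => by
    have := h.isRoot_mul_of_isRoot hn0' ((mem_roots hS0).mp hz)
    rw [Multiset.mem_toFinset, mem_roots hP0]
    simpa using root_mul.mp this
  have hcount : ∀ z ∈ Z, S.roots.count z = P.roots.count z + 1 := fun z hz => by
    rw [Multiset.mem_toFinset, mem_roots hP0] at hz
    rw [count_roots, count_roots, h.rootMultiplicity_eq_min_add_one hn hPn hPn
      (mul_ne_zero hP0 hP0) (root_mul.mpr (Or.inl hz)), min_self]
  have hZ : Z.card = 1 := by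
    have := Multiset.sum_count_eq_card hsub
    rw [Finset.sum_congr rfl hcount, Finset.sum_add_distrib, Multiset.toFinset_sum_count_eq,
      Finset.sum_const, smul_eq_mul, mul_one] at this
    omega
  exact Finset.card_le_one.mp hZ.le x (hsub x hx) y (hsub y hy)

theorem natDegree_eq [CharZero F] (h : IsBelyiTriple n P Q S) (hn : 0 < n)
    (hP : P.natDegree = n) (hQ : Q.natDegree = n) : S.natDegree = n + 1 := by
  have hP0 : P ≠ 0 := by rintro rfl; simp at hP; omega
  have hQ0 : Q ≠ 0 := by rintro rfl; simp at hQ; omega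
  have hne : C (n : F) * P * Q ≠ 0 := by simp [hP0, hQ0, hn.ne']
  have hdeg := congrArg natDegree h.natCast_mul_mul_eq
  rw [natDegree_mul (left_ne_zero_of_mul hne) hQ0, natDegree_C_mul (by simp [hn.ne']),
    natDegree_mul (left_ne_zero_of_mul (h.natCast_mul_mul_eq ▸ hne))
      (right_ne_zero_of_mul (h.natCast_mul_mul_eq ▸ hne)), natDegree_derivative] at hdeg
  omega

theorem nodup_or_forall_eq {mP mQ mS : Multiset F}
    (h : IsBelyiTriple n (mP.map (X - C ·)).prod (mQ.map (X - C ·)).prod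
      (mS.map (X - C ·)).prod)
    (hn : (n ! : F) ≠ 0) (hn0 : 0 < n) (hP : mP.card = n) (hQ : mQ.card = n)
    (hS : mS.card = n + 1) : mS.Nodup ∨ ∀ x ∈ mS, ∀ y ∈ mS, x = y := by
  classical
  have hP' : (mP.map (X - C ·)).prod.natDegree ≤ n :=
    (natDegree_multiset_prod_X_sub_C_eq_card mP).trans_le hP.le
  by_cases hPQ : (mP.map (X - C ·)).prod = (mQ.map (X - C ·)).prod
  · right
    rw [← hPQ] at h
    intro x hx y hy
    rw [← roots_multiset_prod_X_sub_C mS] at hx hy hS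
    exact h.eq_of_mem_roots hn hn0 (monic_multisetProd_X_sub_C mP).ne_zero hP'
      (by rwa [roots_multiset_prod_X_sub_C]) hS hx hy
  · left
    rw [← roots_multiset_prod_X_sub_C mS, h.roots_eq_dedup hn hn0 hP'
      ((natDegree_multiset_prod_X_sub_C_eq_card mQ).trans_le hQ.le)
      ((monic_multisetProd_X_sub_C mP).mul (monic_multisetProd_X_sub_C mQ)).ne_zero hPQ]
    exact Multiset.nodup_dedup _

end IsBelyiTriple

end Field

theorem map_multiset_prod_X_sub_C {R R' : Type*} [CommRing R] [CommRing R'] (f : R →+* R')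
    (m : Multiset R) :
    ((m.map (X - C ·)).prod).map f = ((m.map f).map (X - C ·)).prod := by
  simp [Polynomial.map_multiset_prod, Multiset.map_map]

theorem IsBelyiTriple.nodup_or_forall_eq_of_map {A R k : Type*} [CommRing A] [CommRing R]
    [Field k] {n : ℕ} {i : A →+* R} (hi : Function.Injective i) (r : A →+* k)
    {mP mQ mS : Multiset A}
    (h : IsBelyiTriple n ((mP.map i).map (X - C ·)).prod ((mQ.map i).map (X - C ·)).prod
      ((mS.map i).map (X - C ·)).prod)
    (hn : (n ! : k) ≠ 0) (hn0 : 0 < n) (hP : mP.card = n) (hQ : mQ.card = n)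
    (hS : mS.card = n + 1) : (mS.map r).Nodup ∨ ∀ x ∈ mS, ∀ y ∈ mS, r x = r y := by
  have hA : IsBelyiTriple n (mP.map (X - C ·)).prod (mQ.map (X - C ·)).prod
      (mS.map (X - C ·)).prod :=
    of_map hi (by simpa only [map_multiset_prod_X_sub_C] using h)
  have hk := hA.map r
  simp only [map_multiset_prod_X_sub_C] at hk
  refine (hk.nodup_or_forall_eq hn hn0 (by simpa) (by simpa) (by simpa)).imp_right
    fun h x hx y hy => h _ (Multiset.mem_map_of_mem r hx) _ (Multiset.mem_map_of_mem r hy)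

theorem mul_sub_one_ne_zero {R : Type*} [CommRing R] [IsDomain R] {B : R[X]}
    (hB : 0 < B.natDegree) : B * (B - 1) ≠ 0 := by
  refine mul_ne_zero (by rintro rfl; simp at hB) fun h => ?_
  rw [sub_eq_zero] at h
  simp [h] at hB

theorem mem_roots_mul_sub_one_iff {R : Type*} [CommRing R] [IsDomain R] {B : R[X]}
    (hB : 0 < B.natDegree) {x : R} :
    x ∈ (B * (B - 1)).roots ↔ B.eval x ∈ ({0, 1} : Set R) := by
  simp [mem_roots (mul_sub_one_ne_zero hB), sub_eq_zero]

theorem derivative_comp_dvd_mul_sub_one {R : Type*} [CommRing R] {B q : R[X]}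
    (hq : IsUnit (derivative q)) (hB : derivative B ∣ B * (B - 1)) :
    derivative (B.comp q) ∣ B.comp q * (B.comp q - 1) := by
  obtain ⟨G, hG⟩ := hB
  have := congrArg (·.comp q) hG
  simp only [mul_comp, sub_comp, one_comp] at this
  rw [derivative_comp, hq.mul_left_dvd, this]
  exact dvd_mul_right _ _

section AlgClosed

variable {K : Type*} [Field K] [IsAlgClosed K] [CharZero K] [DecidableEq K]

theorem IsBelyiTriple.eq_prod_dedup_roots {n : ℕ} {P Q S : K[X]} (h : IsBelyiTriple n P Q S)
    (hn : 0 < n) (hP : P.Monic) (hQ : Q.Monic) (hPn : P.natDegree = n) (hQn : Q.natDegree = n)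
    (hne : P ≠ Q) : S = ((P * Q).roots.dedup.map (X - C ·)).prod := by
  have hroots : S.roots = (P * Q).roots.dedup :=
    h.roots_eq_dedup (Nat.cast_ne_zero.mpr (Nat.factorial_ne_zero n)) hn hPn.le hQn.le
      (hP.mul hQ).ne_zero hne
  have hlc : S.leadingCoeff = 1 := by
    have := congrArg leadingCoeff h.natCast_mul_mul_eq
    rw [leadingCoeff_mul, leadingCoeff_mul, leadingCoeff_mul, leadingCoeff_C, hP.leadingCoeff,
      hQ.leadingCoeff, leadingCoeff_derivative, hP.leadingCoeff, hPn] at this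
    have hn' : (n : K) ≠ 0 := Nat.cast_ne_zero.mpr hn.ne'
    field_simp at this
    exact this.symm
  have := C_leadingCoeff_mul_prod_multiset_X_sub_C (p := S) IsAlgClosed.card_roots_eq_natDegree
  rwa [hlc, C_1, one_mul, hroots, eq_comm] at this

theorem isBelyiTriple_of_derivative_dvd {B : K[X]} (hB : derivative B ∣ B * (B - 1))
    (hdeg : 0 < B.natDegree) :
    IsBelyiTriple B.natDegree (B.roots.map (X - C ·)).prod ((B - 1).roots.map (X - C ·)).prod
      ((B * (B - 1)).roots.dedup.map (X - C ·)).prod := by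
  set n := B.natDegree
  set c := B.leadingCoeff
  have hc : c ≠ 0 := leadingCoeff_ne_zero.mpr (left_ne_zero_of_mul (mul_sub_one_ne_zero hdeg))
  set P := (B.roots.map (X - C ·)).prod
  set Q := ((B - 1).roots.map (X - C ·)).prod
  have hP : C c * P = B :=
    C_leadingCoeff_mul_prod_multiset_X_sub_C IsAlgClosed.card_roots_eq_natDegree
  have hQ : C c * Q = B - 1 := by
    have : (B - 1).leadingCoeff = c := leadingCoeff_sub_of_degree_lt
      (by rw [degree_one]; exact natDegree_pos_iff_degree_pos.mp hdeg)
    rw [← this]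
    exact C_leadingCoeff_mul_prod_multiset_X_sub_C IsAlgClosed.card_roots_eq_natDegree
  have hPQ : P - Q = C c⁻¹ := by
    apply mul_left_cancel₀ (C_ne_zero.mpr hc)
    rw [mul_sub, hP, hQ, ← C_mul, mul_inv_cancel₀ hc, C_1, sub_sub_cancel]
  obtain ⟨R, hR⟩ := hB
  have hR' : IsBelyiTriple n P Q (C ((n : K) / c) * R) := by
    refine ⟨⟨c⁻¹, hPQ⟩, mul_left_cancel₀ (C_ne_zero.mpr (mul_ne_zero hc hc)) ?_⟩
    rw [← hQ, ← hP, derivative_C_mul] at hR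
    rw [div_eq_mul_inv, C_mul, C_mul]
    have hcc : C c * C c⁻¹ = 1 := by rw [← C_mul, mul_inv_cancel₀ hc, C_1]
    linear_combination C (n : K) * hR - C c * C (n : K) * derivative P * R * hcc
  have hne : P ≠ Q := fun h => by
    rw [h, sub_self, eq_comm, C_eq_zero] at hPQ
    exact inv_ne_zero hc hPQ
  have hPQroots : (P * Q).roots = (B * (B - 1)).roots := by
    rw [roots_mul ((monic_multisetProd_X_sub_C _).mul (monic_multisetProd_X_sub_C _)).ne_zero,
      roots_mul (mul_sub_one_ne_zero hdeg),
      roots_multiset_prod_X_sub_C, roots_multiset_prod_X_sub_C]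
  rwa [hR'.eq_prod_dedup_roots hdeg (monic_multisetProd_X_sub_C _) (monic_multisetProd_X_sub_C _)
    (by rw [natDegree_multiset_prod_X_sub_C_eq_card, IsAlgClosed.card_roots_eq_natDegree])
    (by rw [natDegree_multiset_prod_X_sub_C_eq_card, IsAlgClosed.card_roots_eq_natDegree, ← C_1,
      natDegree_sub_C]) hne, hPQroots] at hR'

theorem card_dedup_roots_mul_sub_one {B : K[X]} (hB : derivative B ∣ B * (B - 1))
    (hdeg : 0 < B.natDegree) : (B * (B - 1)).roots.dedup.card = B.natDegree + 1 := by
  rw [← natDegree_multiset_prod_X_sub_C_eq_card]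
  refine (isBelyiTriple_of_derivative_dvd hB hdeg).natDegree_eq hdeg ?_ ?_
  · rw [natDegree_multiset_prod_X_sub_C_eq_card, IsAlgClosed.card_roots_eq_natDegree]
  · rw [natDegree_multiset_prod_X_sub_C_eq_card, IsAlgClosed.card_roots_eq_natDegree, ← C_1,
      natDegree_sub_C]

end AlgClosed

end Polynomial

namespace Valuation

variable {K Γ₀ : Type*} [Field K] [LinearOrderedCommGroupWithZero Γ₀] (v : Valuation K Γ₀)

theorem residue_eq_zero_iff (x : v.valuationSubring) :
    IsLocalRing.residue v.valuationSubring x = 0 ↔ v x < 1 := by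
  rw [IsLocalRing.residue_eq_zero_iff, IsLocalRing.mem_maximalIdeal, mem_nonunits_iff,
    (valuationSubring.integers v).isUnit_iff_valuation_eq_one]
  exact ⟨fun h => lt_of_le_of_ne x.2 h, ne_of_lt⟩

theorem valuation_sub_eq_one_iff (x y : v.valuationSubring) :
    v ((x : K) - y) = 1 ↔
      IsLocalRing.residue v.valuationSubring x ≠ IsLocalRing.residue v.valuationSubring y := by
  rw [Ne, ← sub_eq_zero (a := IsLocalRing.residue _ x), ← _root_.map_sub, residue_eq_zero_iff]
  exact ⟨fun h => h.not_lt, fun h => le_antisymm (x - y).2 (not_lt.mp h)⟩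

theorem natCast_factorial_ne_zero_residueField {p : ℕ} (hp : p.Prime) (hvp : v p < 1) {n : ℕ}
    (hn : n < p) : (n ! : IsLocalRing.ResidueField v.valuationSubring) ≠ 0 := by
  have : CharP (IsLocalRing.ResidueField v.valuationSubring) p :=
    (CharP.charP_iff_prime_eq_zero hp).mpr <| by
      rw [← map_natCast (IsLocalRing.residue v.valuationSubring), residue_eq_zero_iff]
      simpa using hvp
  rw [Ne, CharP.cast_eq_zero_iff _ p, hp.dvd_factorial]
  omega

end Valuation

section Reduction

open IsLocalRing

variable {K Γ₀ : Type*} [Field K] [IsAlgClosed K] [CharZero K]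
  [LinearOrderedCommGroupWithZero Γ₀] (v : Valuation K Γ₀)

theorem valuation_sub_eq_one_of_derivative_dvd {B : K[X]} (hB : derivative B ∣ B * (B - 1))
    (hdeg : 0 < B.natDegree) (hres : (B.natDegree ! : ResidueField v.valuationSubring) ≠ 0)
    (hint : ∀ t, B.eval t ∈ ({0, 1} : Set K) → v t ≤ 1) {x y : K}
    (hx : B.eval x ∈ ({0, 1} : Set K)) (hy : B.eval y ∈ ({0, 1} : Set K)) (hxy : v (x - y) = 1)
    {s t : K} (hs : B.eval s ∈ ({0, 1} : Set K)) (ht : B.eval t ∈ ({0, 1} : Set K))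
    (hst : s ≠ t) : v (s - t) = 1 := by
  classical
  set O := v.valuationSubring
  have hlift (m : Multiset K) (hm : m ≤ (B * (B - 1)).roots) :
      ∃ m₀ : Multiset O, m₀.map (↑) = m :=
    CanLift.prf m fun z hz =>
      hint z ((mem_roots_mul_sub_one_iff hdeg).mp (Multiset.mem_of_le hm hz))
  obtain ⟨mP, hmP⟩ := hlift B.roots
    (by rw [roots_mul (mul_sub_one_ne_zero hdeg)]; exact Multiset.le_add_right _ _)
  obtain ⟨mQ, hmQ⟩ := hlift (B - 1).roots
    (by rw [roots_mul (mul_sub_one_ne_zero hdeg)]; exact Multiset.le_add_left _ _)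
  obtain ⟨mS, hmS⟩ := hlift (B * (B - 1)).roots.dedup (Multiset.dedup_le _)
  have hcard (m : Multiset O) (G : K[X]) (hm : m.map (↑) = G.roots) : m.card = G.natDegree := by
    rw [← Multiset.card_map Subtype.val, hm, IsAlgClosed.card_roots_eq_natDegree]
  have hmem {z : K} (hz : B.eval z ∈ ({0, 1} : Set K)) : ∃ z₀ ∈ mS, (z₀ : K) = z := by
    rw [← Multiset.mem_map, hmS, Multiset.mem_dedup, mem_roots_mul_sub_one_iff hdeg]
    exact hz
  obtain ⟨x₀, hx₀, rfl⟩ := hmem hx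
  obtain ⟨y₀, hy₀, rfl⟩ := hmem hy
  obtain ⟨s₀, hs₀, rfl⟩ := hmem hs
  obtain ⟨t₀, ht₀, rfl⟩ := hmem ht
  rw [v.valuation_sub_eq_one_iff] at hxy ⊢
  rcases IsBelyiTriple.nodup_or_forall_eq_of_map O.subtype_injective (residue O) (mQ := mQ)
    (mS := mS) (by simpa only [ValuationSubring.coe_subtype, hmP, hmQ, hmS]
      using isBelyiTriple_of_derivative_dvd hB hdeg)
    hres hdeg (hcard mP B hmP) (by rw [hcard mQ (B - 1) hmQ, ← C_1, natDegree_sub_C])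
    (by rw [← Multiset.card_map Subtype.val, hmS, card_dedup_roots_mul_sub_one hB hdeg])
    with hnodup | hall
  · exact fun h => hst (congrArg _ (Multiset.inj_on_of_nodup_map hnodup s₀ hs₀ t₀ ht₀ h))
  · exact absurd (hall _ hx₀ _ hy₀) hxy

theorem valuation_sub_eq_of_forall_le {B : K[X]} (hB : derivative B ∣ B * (B - 1))
    (hdeg : 0 < B.natDegree) (hres : (B.natDegree ! : ResidueField v.valuationSubring) ≠ 0)
    {a b : K} (ha : B.eval a ∈ ({0, 1} : Set K)) (hb : B.eval b ∈ ({0, 1} : Set K))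
    (hab : a ≠ b)
    (hmax : ∀ z w, B.eval z ∈ ({0, 1} : Set K) → B.eval w ∈ ({0, 1} : Set K) →
      v (z - w) ≤ v (a - b))
    {z w : K} (hz : B.eval z ∈ ({0, 1} : Set K)) (hw : B.eval w ∈ ({0, 1} : Set K))
    (hzw : z ≠ w) : v (z - w) = v (a - b) := by
  set δ := a - b
  have hδ : δ ≠ 0 := sub_ne_zero.mpr hab
  have hvδ : v δ ≠ 0 := (map_ne_zero v).mpr hδ
  -- `z ↦ (z - b) / δ` makes `B⁻¹{0, 1}` integral and sends `a`, `b` to `1`, `0`.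
  set B' := B.comp (C δ * X + C b)
  have heval (z : K) : B'.eval z = B.eval (δ * z + b) := by simp [B']
  have hunscale (z : K) : δ * ((z - b) / δ) + b = z := by field_simp; ring
  have hdeg' : B'.natDegree = B.natDegree := by
    rw [natDegree_comp, natDegree_linear hδ, mul_one]
  have hint (w : K) (hw : B'.eval w ∈ ({0, 1} : Set K)) : v w ≤ 1 := by
    have := hmax _ _ (heval w ▸ hw) hb
    rw [add_sub_cancel_right, map_mul] at this
    exact (mul_le_mul_iff_right₀ (zero_lt_iff.mpr hvδ)).mp (by rwa [mul_one])
  have h1 := valuation_sub_eq_one_of_derivative_dvd v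
    (derivative_comp_dvd_mul_sub_one (by simp [hδ]) hB) (hdeg' ▸ hdeg) (hdeg' ▸ hres) hint
    (x := 1) (y := 0) (by rwa [heval, mul_one, sub_add_cancel])
    (by rwa [heval, mul_zero, zero_add]) (by simp)
    (s := (z - b) / δ) (t := (w - b) / δ) (by rwa [heval, hunscale])
    (by rwa [heval, hunscale]) (fun h => hzw (by simpa [hδ] using h))
  rwa [div_sub_div_same, sub_sub_sub_cancel_right, map_div₀, div_eq_one_iff_eq hvδ] at h1

theorem valuation_sub_eq_of_derivative_dvd {B : K[X]} (hB : derivative B ∣ B * (B - 1))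
    (hdeg : 0 < B.natDegree) (hres : (B.natDegree ! : ResidueField v.valuationSubring) ≠ 0)
    {s t s' t' : K} (hs : B.eval s ∈ ({0, 1} : Set K)) (ht : B.eval t ∈ ({0, 1} : Set K))
    (hs' : B.eval s' ∈ ({0, 1} : Set K)) (ht' : B.eval t' ∈ ({0, 1} : Set K))
    (hst : s ≠ t) (hst' : s' ≠ t') : v (s - t) = v (s' - t') := by
  classical
  set T := (B * (B - 1)).roots.toFinset
  have hT {z : K} : z ∈ T ↔ B.eval z ∈ ({0, 1} : Set K) := by
    rw [Multiset.mem_toFinset, mem_roots_mul_sub_one_iff hdeg]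
  obtain ⟨⟨a, b⟩, hab, hmax⟩ := Finset.exists_max_image (T ×ˢ T) (fun q => v (q.1 - q.2))
    ⟨(s, t), Finset.mem_product.mpr ⟨hT.mpr hs, hT.mpr ht⟩⟩
  have hmax' (z w : K) (hz : B.eval z ∈ ({0, 1} : Set K)) (hw : B.eval w ∈ ({0, 1} : Set K)) :
      v (z - w) ≤ v (a - b) :=
    hmax (z, w) (Finset.mem_product.mpr ⟨hT.mpr hz, hT.mpr hw⟩)
  have hab' : a ≠ b := by
    rintro rfl
    have := hmax' s t hs ht
    rw [sub_self, map_zero, le_zero_iff, map_eq_zero, sub_eq_zero] at this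
    exact hst this
  have ha := hT.mp (Finset.mem_product.mp hab).1
  have hb := hT.mp (Finset.mem_product.mp hab).2
  rw [valuation_sub_eq_of_forall_le v hB hdeg hres ha hb hab' hmax' hs ht hst,
    valuation_sub_eq_of_forall_le v hB hdeg hres ha hb hab' hmax' hs' ht' hst']

end Reduction

theorem belyi_height_ge_prime_general {K : Type*} [Field K] [IsAlgClosed K] [CharZero K]
    (p : ℕ) (hp : p.Prime) (v : Valuation K NNReal)
    (hvp1 : v (p : K) < 1)
    (B : K[X]) (hB : IsBelyi B) (hBdeg : 0 < B.natDegree)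
    (lam : K) (hlam0 : lam ≠ 0) (hlamv : v lam ≠ 1)
    (hBlam : B.eval lam ∈ ({0, 1} : Set K)) :
    p ≤ B.natDegree := by
  obtain ⟨h0, h1, hdvd⟩ := hB
  by_contra! hlt
  have := valuation_sub_eq_of_derivative_dvd v hdvd hBdeg
    (v.natCast_factorial_ne_zero_residueField hp hvp1 hlt) hBlam h0 h1 h0 hlam0 one_ne_zero
  rw [sub_zero, sub_zero, map_one] at this
  exact hlamv this

/-- If `B` is a nonconstant Belyi polynomial over an algebraically closed field `K` of
characteristic zero carrying a multiplicative valuation `v` with `0 < v p < 1` for a prime `p`,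
and `λ ≠ 0` has `v λ ≠ 1`, then `B λ ∈ {0,1}` forces `deg B ≥ p`. -/
theorem belyi_height_ge_prime {K : Type*} [Field K] [IsAlgClosed K] [CharZero K]
    (p : ℕ) (hp : p.Prime) (v : Valuation K NNReal)
    (hvp0 : 0 < v (p : K)) (hvp1 : v (p : K) < 1)
    (B : K[X]) (hB : IsBelyi B) (hBdeg : 0 < B.natDegree)
    (lam : K) (hlam0 : lam ≠ 0) (hlamv : v lam ≠ 1)
    (hBlam : B.eval lam ∈ ({0, 1} : Set K)) :
    p ≤ B.natDegree :=
  belyi_height_ge_prime_general p hp v hvp1 B hB hBdeg lam hlam0 hlamv hBlam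
end

section
/- Let p be a prime, let B ∈ ℚ[X] be a nonconstant Belyi polynomial, and let q ∈ ℚ be nonzero with non-zero p-adic valuation (padicValRat p q ≠ 0). If B(q) ∈ {0,1}, then the degree of B is at least p. In particular, a Belyi polynomial over ℚ having a rational root a/b in lowest terms has degree at least every prime dividing a·b. -/
open Polynomial

/-
Map `B` to `ℚ_[p]` and, replacing `B` by `1 - B` if necessary, assume `B 0 = 0`. If `deg B < p`
then `B` has good reduction: its coefficients are `p`-integral and not all divisible by `p`.
Indeed, write `B = p ^ s • B₀` with `B₀` over `ℤ_[p]` not divisible by `p`, and let `P` be the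
reduction of `B₀`. If `s ≠ 0`, then `P` vanishes at `0` and `1`, and the identity
`B (B - 1) = B' H` reduces modulo `p` to `c P ^ j = P' H̄` (`j = 1` if `s > 0`, `j = 2` if `s < 0`).
As `deg P < p`, a root of `P` of multiplicity `m` is a root of `P'` of multiplicity exactly
`m - 1`, hence a root of `H̄` of multiplicity `(j - 1) m + 1`; comparing degrees, `P` has only
one distinct root.

Since `B q ∈ {0, 1}`, the polynomial `B (q X)` is Belyi as well, hence also has good reduction.
Its coefficients are those of `B` multiplied by `q ^ i`, which forces `‖q‖ = 1`, i.e. `v_p(q) = 0`.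
-/

section CharP

variable {K : Type*} [Field K] {p : ℕ} [CharP K p] {P H : K[X]} {c : K} {j : ℕ}

theorem CharP.natCast_ne_zero_of_pos_of_lt {m : ℕ} (hm : 0 < m) (hmp : m < p) :
    (m : K) ≠ 0 := by
  rw [Ne, CharP.cast_eq_zero_iff K p]
  exact fun h => (Nat.le_of_dvd hm h).not_gt hmp

theorem coeff_derivative_natDegree_sub_one_ne_zero (hpos : 0 < P.natDegree)
    (hdeg : P.natDegree < p) :
    (derivative P).coeff (P.natDegree - 1) ≠ 0 := by
  rw [coeff_derivative, Nat.sub_add_cancel hpos, ← Nat.cast_succ, Nat.succ_eq_add_one,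
    Nat.sub_add_cancel hpos]
  exact mul_ne_zero (leadingCoeff_ne_zero.2 (ne_zero_of_natDegree_gt hpos))
    (CharP.natCast_ne_zero_of_pos_of_lt hpos hdeg)

theorem natDegree_derivative_of_natDegree_lt (hdeg : P.natDegree < p) :
    (derivative P).natDegree = P.natDegree - 1 := by
  rcases Nat.eq_zero_or_pos P.natDegree with h0 | hpos
  · simpa [h0] using natDegree_derivative_le P
  exact natDegree_eq_of_le_of_coeff_ne_zero (natDegree_derivative_le P)
    (coeff_derivative_natDegree_sub_one_ne_zero hpos hdeg)

theorem rootMultiplicity_of_C_mul_pow_eq_derivative_mul (hc : c ≠ 0) (hj : 0 < j)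
    (hdeg : P.natDegree < p) (h : C c * P ^ j = derivative P * H) (hP : P ≠ 0) {x : K}
    (hx : P.IsRoot x) :
    H.rootMultiplicity x = (j - 1) * P.rootMultiplicity x + 1 := by
  classical
  have hm : 0 < P.rootMultiplicity x := (rootMultiplicity_pos hP).2 hx
  have hmp : P.rootMultiplicity x < p :=
    (count_roots P ▸ (Multiset.count_le_card x _).trans (card_roots' P)).trans_lt hdeg
  have hder : (derivative P).rootMultiplicity x = P.rootMultiplicity x - 1 :=
    derivative_rootMultiplicity_of_root_of_mem_nonZeroDivisors hx
      (mem_nonZeroDivisors_of_ne_zero (CharP.natCast_ne_zero_of_pos_of_lt hm hmp))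
  have hlhs : C c * P ^ j ≠ 0 := mul_ne_zero (C_ne_zero.2 hc) (pow_ne_zero _ hP)
  have hmult := congrArg (rootMultiplicity x) h
  rw [rootMultiplicity_mul hlhs, rootMultiplicity_C, ← count_roots, roots_pow,
    Multiset.count_nsmul, count_roots, rootMultiplicity_mul (h ▸ hlhs), hder] at hmult
  obtain ⟨k, rfl⟩ : ∃ k, j = k + 1 := ⟨j - 1, by omega⟩
  rw [Nat.add_sub_cancel]
  rw [add_mul, one_mul] at hmult
  omega

theorem IsAlgClosed.eq_of_isRoot_of_C_mul_pow_eq_derivative_mul [IsAlgClosed K] (hc : c ≠ 0)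
    (hj : 0 < j) (hdeg : P.natDegree < p) (h : C c * P ^ j = derivative P * H) (hP : P ≠ 0)
    {a b : K} (ha : P.IsRoot a) (hb : P.IsRoot b) : a = b := by
  classical
  by_contra hab
  have hroots : j • P.roots = (derivative P).roots + H.roots := by
    rw [← roots_pow, ← roots_C_mul _ hc, h,
      roots_mul (h ▸ mul_ne_zero (C_ne_zero.2 hc) (pow_ne_zero _ hP))]
  have hle : (j - 1) • P.roots + {a, b} ≤ H.roots := by
    refine Multiset.le_iff_count.2 fun x => ?_
    by_cases hx : P.IsRoot x
    · have hab' : ({a, b} : Multiset K).count x ≤ 1 :=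
        Multiset.nodup_iff_count_le_one.1 (by simpa using hab) x
      rw [Multiset.count_add, Multiset.count_nsmul, count_roots, count_roots,
        rootMultiplicity_of_C_mul_pow_eq_derivative_mul hc hj hdeg h hP hx]
      omega
    · have hxa : x ≠ a := fun hxa => hx (hxa ▸ ha)
      have hxb : x ≠ b := fun hxb => hx (hxb ▸ hb)
      simp [hxa, hxb, rootMultiplicity_eq_zero hx]
  have hcard := congrArg Multiset.card hroots
  have hcard' := Multiset.card_le_card hle
  simp only [Multiset.card_nsmul, Multiset.card_add, IsAlgClosed.card_roots_eq_natDegree,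
    natDegree_derivative_of_natDegree_lt hdeg, Multiset.insert_eq_cons, Multiset.card_cons,
    Multiset.card_singleton] at hcard hcard'
  obtain ⟨k, rfl⟩ : ∃ k, j = k + 1 := ⟨j - 1, by omega⟩
  rw [Nat.add_sub_cancel] at hcard'
  rw [add_mul, one_mul] at hcard
  omega

theorem eq_of_isRoot_of_C_mul_pow_eq_derivative_mul (hc : c ≠ 0) (hj : 0 < j)
    (hdeg : P.natDegree < p) (h : C c * P ^ j = derivative P * H) (hP : P ≠ 0) {a b : K}
    (ha : P.IsRoot a) (hb : P.IsRoot b) : a = b := by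
  let ι := algebraMap K (AlgebraicClosure K)
  have hmap : C (ι c) * (P.map ι) ^ j = derivative (P.map ι) * H.map ι := by
    rw [derivative_map, ← Polynomial.map_C, ← Polynomial.map_pow, ← Polynomial.map_mul, h,
      Polynomial.map_mul]
  refine ι.injective (IsAlgClosed.eq_of_isRoot_of_C_mul_pow_eq_derivative_mul
    ((map_ne_zero ι).2 hc) hj ((natDegree_map ι).symm ▸ hdeg) hmap
    ((Polynomial.map_ne_zero_iff ι.injective).2 hP) ha.map hb.map)

end CharP

theorem derivative_comp_C_mul_X_dvd {K : Type*} [Field K] {F : K[X]} {a : K} (ha : a ≠ 0)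
    (h : derivative F ∣ F * (F - 1)) :
    derivative (F.comp (C a * X)) ∣ F.comp (C a * X) * (F.comp (C a * X) - 1) := by
  rw [derivative_comp, derivative_C_mul_X, (isUnit_C.2 (IsUnit.mk0 a ha)).mul_left_dvd]
  simpa [sub_comp, mul_comp] using map_dvd (compRingHom (C a * X)) h

theorem norm_le_one_of_supNorm_comp_C_mul_X_le_one {K : Type*} [NormedField K] {F : K[X]}
    {q : K} (h0 : F.coeff 0 = 0) (hF : 1 ≤ F.supNorm) (hG : (F.comp (C q * X)).supNorm ≤ 1) :
    ‖q‖ ≤ 1 := by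
  obtain ⟨i, hi⟩ := F.exists_eq_supNorm
  have hi0 : i ≠ 0 := by
    rintro rfl
    rw [hi, h0, norm_zero] at hF
    norm_num at hF
  have hcoeff : ‖F.coeff i‖ * ‖q‖ ^ i ≤ 1 := by
    simpa [norm_mul, norm_pow] using (le_supNorm _ i).trans hG
  refine (pow_le_one_iff_of_nonneg (norm_nonneg q) hi0).1 ?_
  exact (le_mul_of_one_le_left (by positivity) (hi ▸ hF)).trans hcoeff

namespace IsBelyi

variable {K : Type*} [Field K] {B : K[X]}

theorem map {L : Type*} [Field L] (f : K →+* L) (hB : IsBelyi B) : IsBelyi (B.map f) := by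
  refine ⟨?_, ?_, ?_⟩
  · rw [eval_zero_map]
    rcases hB.1 with h | h <;> simp_all
  · rw [eval_one_map]
    rcases hB.2.1 with h | h <;> simp_all
  · simpa [derivative_map, Polynomial.map_mul, Polynomial.map_sub] using
      map_dvd (mapRingHom f) hB.2.2

theorem one_sub (hB : IsBelyi B) : IsBelyi (1 - B) := by
  refine ⟨?_, ?_, ?_⟩
  · rcases hB.1 with h | h <;> simp_all
  · rcases hB.2.1 with h | h <;> simp_all
  · rw [derivative_sub, derivative_one, zero_sub, neg_dvd,
      show (1 - B) * (1 - B - 1) = B * (B - 1) by ring]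
    exact hB.2.2

theorem comp_C_mul_X (hB : IsBelyi B) {a : K} (ha : a ≠ 0)
    (hBa : B.eval a ∈ ({0, 1} : Set K)) : IsBelyi (B.comp (C a * X)) := by
  refine ⟨?_, ?_, derivative_comp_C_mul_X_dvd ha hB.2.2⟩
  · simpa using hB.1
  · simpa using hBa

end IsBelyi

namespace PadicInt

variable {p : ℕ} [Fact p.Prime]

theorem toZMod_eq_zero_iff_norm_lt_one (x : ℤ_[p]) : toZMod x = 0 ↔ ‖x‖ < 1 := by
  rw [← RingHom.mem_ker, ker_toZMod, IsLocalRing.mem_maximalIdeal, mem_nonunits]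

theorem norm_coeff_map_coe (F : ℤ_[p][X]) (k : ℕ) :
    ‖(F.map Coe.ringHom).coeff k‖ = ‖F.coeff k‖ := by
  rw [coeff_map]
  rfl

theorem supNorm_map_coe_eq_one {F : ℤ_[p][X]} (hF : F.map toZMod ≠ 0) :
    (F.map Coe.ringHom).supNorm = 1 := by
  obtain ⟨i, hi⟩ := (F.map Coe.ringHom).exists_eq_supNorm
  obtain ⟨k, hk⟩ : ∃ k, toZMod (F.coeff k) ≠ 0 := by
    by_contra! h
    exact hF (Polynomial.ext fun k => by rw [coeff_map, h k, coeff_zero])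
  have hle : ∀ k, ‖F.coeff k‖ ≤ (F.map Coe.ringHom).supNorm := fun k =>
    norm_coeff_map_coe F k ▸ le_supNorm _ k
  rw [Ne, toZMod_eq_zero_iff_norm_lt_one, not_lt] at hk
  refine le_antisymm ?_ (hk.trans (hle k))
  exact hi ▸ norm_coeff_map_coe F i ▸ (F.coeff i).norm_le_one

theorem exists_eq_C_zpow_mul_map {F : ℚ_[p][X]} (hF : F ≠ 0) :
    ∃ (s : ℤ) (F₀ : ℤ_[p][X]),
      F = C ((p : ℚ_[p]) ^ s) * F₀.map Coe.ringHom ∧ F₀.map toZMod ≠ 0 := by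
  obtain ⟨i, hi⟩ := F.exists_eq_supNorm
  have hFi : F.coeff i ≠ 0 := by
    rw [← norm_ne_zero_iff, ← hi]
    exact fun h => hF (supNorm_eq_zero_iff F |>.1 h)
  set s := (F.coeff i).valuation
  have hp : (p : ℚ_[p]) ≠ 0 := NeZero.ne _
  have hnorm_coeff : ∀ k, ‖(C ((p : ℚ_[p]) ^ (-s)) * F).coeff k‖ = ‖F.coeff k‖ / ‖F.coeff i‖ :=
    fun k => by
      rw [coeff_C_mul, norm_mul, Padic.norm_p_zpow, neg_neg, Padic.norm_eq_zpow_neg_valuation hFi,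
        zpow_neg, div_inv_eq_mul, mul_comm]
  have hnorm : ∀ k, ‖(C ((p : ℚ_[p]) ^ (-s)) * F).coeff k‖ ≤ 1 := fun k => by
    rw [hnorm_coeff, div_le_one (norm_pos_iff.2 hFi), ← hi]
    exact le_supNorm F k
  obtain ⟨F₀, hF₀⟩ := (mem_lifts _).1 <| (lifts_iff_coeff_lifts (f := Coe.ringHom (p := p))
    (C ((p : ℚ_[p]) ^ (-s)) * F)).2
    fun k => Set.mem_range.2 ⟨⟨_, hnorm k⟩, rfl⟩
  refine ⟨s, F₀, ?_, ?_⟩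
  · rw [hF₀, ← mul_assoc, ← C_mul, ← zpow_add₀ hp, add_neg_cancel, zpow_zero, C_1, one_mul]
  · intro h0
    have := (toZMod_eq_zero_iff_norm_lt_one (F₀.coeff i)).1 (by rw [← coeff_map, h0, coeff_zero])
    rw [← norm_coeff_map_coe, hF₀, hnorm_coeff, div_self (norm_ne_zero_iff.2 hFi)] at this
    exact this.false

theorem map_toZMod_eq_zero_of_map_coe_eq_C_pow_mul {A B : ℤ_[p][X]} {n : ℕ} (hn : n ≠ 0)
    (h : A.map Coe.ringHom = C ((p : ℚ_[p]) ^ n) * B.map Coe.ringHom) : A.map toZMod = 0 := by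
  have hA : A = C ((p : ℤ_[p]) ^ n) * B := by
    refine map_injective (Coe.ringHom (p := p)) Subtype.val_injective ?_
    simp [h]
  rw [hA, Polynomial.map_mul, map_C, map_pow, map_natCast, ZMod.natCast_self, zero_pow hn, C_0,
    zero_mul]

theorem map_toZMod_eq_of_map_coe_eq_C_zpow_mul {A B : ℤ_[p][X]} {e : ℤ}
    (hA : A.map toZMod ≠ 0) (hB : B.map toZMod ≠ 0)
    (h : A.map Coe.ringHom = C ((p : ℚ_[p]) ^ e) * B.map Coe.ringHom) :
    A.map toZMod = B.map toZMod := by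
  rcases eq_or_ne e 0 with rfl | he
  · rw [zpow_zero, C_1, one_mul] at h
    rw [map_injective _ Subtype.val_injective h]
  have hp : (p : ℚ_[p]) ≠ 0 := NeZero.ne _
  obtain ⟨n, rfl | rfl⟩ := e.eq_nat_or_neg
  · exact absurd (map_toZMod_eq_zero_of_map_coe_eq_C_pow_mul (by exact_mod_cast he)
      (by rwa [zpow_natCast] at h)) hA
  · refine absurd (map_toZMod_eq_zero_of_map_coe_eq_C_pow_mul (B := A) (by simpa using he) ?_) hB
    rw [h, ← mul_assoc, ← C_mul, zpow_neg, zpow_natCast, mul_inv_cancel₀ (pow_ne_zero _ hp),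
      C_1, one_mul]

theorem toZMod_eq_zero_of_zpow_mul_mem {x : ℤ_[p]} {s : ℤ} (hs : s ≠ 0)
    (h : (p : ℚ_[p]) ^ s * x ∈ ({0, 1} : Set ℚ_[p])) : toZMod x = 0 := by
  rw [toZMod_eq_zero_iff_norm_lt_one]
  by_contra hx
  have hx1 : ‖(x : ℚ_[p])‖ = 1 := le_antisymm x.norm_le_one (not_lt.1 hx)
  have hp : (1 : ℝ) < p := by exact_mod_cast (Fact.out : p.Prime).one_lt
  rcases h with h | h
  · have := congrArg norm h
    rw [norm_mul, hx1, mul_one, Padic.norm_p_zpow, norm_zero] at this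
    exact (zpow_pos (by positivity) _).ne' this
  · have := congrArg norm h
    rw [norm_mul, hx1, mul_one, Padic.norm_p_zpow, norm_one,
      zpow_eq_one_iff_right₀ (by positivity) hp.ne'] at this
    exact hs (neg_eq_zero.1 this)

theorem map_toZMod_mul_eq_derivative_mul {F₀ G₀ H₀ : ℤ_[p][X]} {s u t : ℤ}
    (hF₀ : F₀.map toZMod ≠ 0) (hG₀ : G₀.map toZMod ≠ 0)
    (hdF₀ : derivative (F₀.map toZMod) ≠ 0) (hH₀ : H₀.map toZMod ≠ 0)
    (h : C ((p : ℚ_[p]) ^ s) * F₀.map Coe.ringHom * (C ((p : ℚ_[p]) ^ u) * G₀.map Coe.ringHom) =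
      derivative (C ((p : ℚ_[p]) ^ s) * F₀.map Coe.ringHom) *
        (C ((p : ℚ_[p]) ^ t) * H₀.map Coe.ringHom)) :
    F₀.map toZMod * G₀.map toZMod = derivative (F₀.map toZMod) * H₀.map toZMod := by
  have hp : (p : ℚ_[p]) ≠ 0 := NeZero.ne _
  have hcancel : (F₀ * G₀).map Coe.ringHom =
      C ((p : ℚ_[p]) ^ (t - u)) * (derivative F₀ * H₀).map Coe.ringHom := by
    refine mul_left_cancel₀ (C_ne_zero.2 (zpow_ne_zero (s + u) hp)) ?_
    rw [derivative_C_mul, derivative_map] at h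
    rw [Polynomial.map_mul, Polynomial.map_mul, ← mul_assoc (C _) (C _), ← C_mul, ← zpow_add₀ hp,
      show s + u + (t - u) = s + t by ring, zpow_add₀ hp, zpow_add₀ hp, C_mul, C_mul]
    linear_combination h
  have := map_toZMod_eq_of_map_coe_eq_C_zpow_mul (by simpa using mul_ne_zero hF₀ hG₀)
    (by simpa [derivative_map] using mul_ne_zero hdF₀ hH₀) hcancel
  simpa [Polynomial.map_mul, derivative_map] using this

theorem exists_C_mul_pow_eq_derivative_mul {F₀ H₀ : ℤ_[p][X]} {s t : ℤ} (hs : s ≠ 0)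
    (hF₀ : F₀.map toZMod ≠ 0) (hdF₀ : derivative (F₀.map toZMod) ≠ 0)
    (hH₀ : H₀.map toZMod ≠ 0)
    (h : C ((p : ℚ_[p]) ^ s) * F₀.map Coe.ringHom * (C ((p : ℚ_[p]) ^ s) * F₀.map Coe.ringHom - 1) =
      derivative (C ((p : ℚ_[p]) ^ s) * F₀.map Coe.ringHom) *
        (C ((p : ℚ_[p]) ^ t) * H₀.map Coe.ringHom)) :
    ∃ c ≠ 0, ∃ j, 0 < j ∧
      C c * F₀.map toZMod ^ j = derivative (F₀.map toZMod) * H₀.map toZMod := by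
  have hp : (p : ℚ_[p]) ≠ 0 := NeZero.ne _
  rcases hs.lt_or_gt with hneg | hpos
  · obtain ⟨n, rfl⟩ : ∃ n : ℕ, s = -n := ⟨s.natAbs, by omega⟩
    have hG₀ : (F₀ - C ((p : ℤ_[p]) ^ n)).map toZMod = F₀.map toZMod := by
      simp [Polynomial.map_sub, show n ≠ 0 by omega]
    have key := map_toZMod_mul_eq_derivative_mul (G₀ := F₀ - C ((p : ℤ_[p]) ^ n)) (u := -n)
      hF₀ (hG₀ ▸ hF₀) hdF₀ hH₀ (by
        convert h using 3
        rw [Polynomial.map_sub, Polynomial.map_C, map_pow, map_natCast, mul_sub, ← C_mul, zpow_neg,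
          zpow_natCast, inv_mul_cancel₀ (pow_ne_zero _ hp), C_1])
    rw [hG₀] at key
    exact ⟨1, one_ne_zero, 2, two_pos, by rw [C_1, one_mul, sq, key]⟩
  · obtain ⟨n, rfl⟩ : ∃ n : ℕ, s = n := ⟨s.natAbs, by omega⟩
    have hG₀ : (C ((p : ℤ_[p]) ^ n) * F₀ - 1).map toZMod = C (-1) := by
      simp [Polynomial.map_sub, show n ≠ 0 by omega]
    have key := map_toZMod_mul_eq_derivative_mul (G₀ := C ((p : ℤ_[p]) ^ n) * F₀ - 1) (u := 0)
      hF₀ (by rw [hG₀]; simp) hdF₀ hH₀ (by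
        convert h using 3
        simp [Polynomial.map_sub])
    rw [hG₀] at key
    exact ⟨-1, by simp, 1, one_pos, by rw [pow_one, mul_comm, key]⟩

end PadicInt

namespace Padic

variable {p : ℕ} [Fact p.Prime]

open PadicInt

theorem supNorm_eq_one_of_derivative_dvd {F : ℚ_[p][X]} (h0 : F.eval 0 = 0)
    (h1 : F.eval 1 ∈ ({0, 1} : Set ℚ_[p])) (hdvd : derivative F ∣ F * (F - 1))
    (hpos : 0 < F.natDegree) (hdeg : F.natDegree < p) : F.supNorm = 1 := by
  have hp : (p : ℚ_[p]) ≠ 0 := NeZero.ne _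
  obtain ⟨H, hH⟩ := hdvd
  have hH0 : H ≠ 0 := by
    rintro rfl
    rw [mul_zero, mul_eq_zero, sub_eq_zero] at hH
    rcases hH with rfl | rfl
    · simp at hpos
    · simp at h0
  obtain ⟨s, F₀, rfl, hF₀⟩ := exists_eq_C_zpow_mul_map (ne_zero_of_natDegree_gt hpos)
  obtain ⟨t, H₀, rfl, hH₀⟩ := exists_eq_C_zpow_mul_map hH0
  set P := F₀.map toZMod
  have hP0 : P.coeff 0 = 0 := by
    rw [eval_mul, eval_C, ← coeff_zero_eq_eval_zero, coeff_map, mul_eq_zero,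
      or_iff_right (zpow_ne_zero s hp), map_eq_zero_iff _ Subtype.val_injective] at h0
    rw [coeff_map, h0, map_zero]
  have hdegP : P.natDegree < p := by
    refine natDegree_map_le.trans_lt ?_
    rwa [natDegree_C_mul (zpow_ne_zero s hp), natDegree_map_eq_of_injective Subtype.val_injective]
      at hdeg
  have hposP : 0 < P.natDegree := by
    refine Nat.pos_of_ne_zero fun hd => hF₀ ?_
    rw [eq_C_of_natDegree_eq_zero hd, hP0, C_0]
  suffices hs : s = 0 by
    rw [hs, zpow_zero, C_1, one_mul]
    exact supNorm_map_coe_eq_one hF₀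
  by_contra hs
  have hP1 : P.IsRoot 1 := by
    rw [IsRoot, eval_one_map]
    refine toZMod_eq_zero_of_zpow_mul_mem hs ?_
    rwa [eval_mul, eval_C, eval_one_map] at h1
  obtain ⟨c, hc, j, hj, hid⟩ := exists_C_mul_pow_eq_derivative_mul hs hF₀
    (fun h => coeff_derivative_natDegree_sub_one_ne_zero hposP hdegP (by rw [h, coeff_zero]))
    hH₀ hH
  exact zero_ne_one (eq_of_isRoot_of_C_mul_pow_eq_derivative_mul hc hj hdegP hid hF₀
    (by rwa [IsRoot, ← coeff_zero_eq_eval_zero]) hP1)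

end Padic

theorem IsBelyi.norm_eq_one {p : ℕ} [Fact p.Prime] {F : ℚ_[p][X]} (hF : IsBelyi F)
    (hpos : 0 < F.natDegree) (hdeg : F.natDegree < p) {q : ℚ_[p]} (hq : q ≠ 0)
    (hFq : F.eval q ∈ ({0, 1} : Set ℚ_[p])) : ‖q‖ = 1 := by
  wlog h0 : F.eval 0 = 0 generalizing F
  · have h1F : (1 - F).natDegree = F.natDegree := by
      rw [natDegree_sub, ← C_1, natDegree_sub_C]
    refine this hF.one_sub (h1F ▸ hpos) (h1F ▸ hdeg) ?_ ?_
    · rcases hFq with h | h <;> simp_all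
    · rcases hF.1 with h | h <;> simp_all
  set G := F.comp (C q * X)
  have hG : IsBelyi G := hF.comp_C_mul_X hq hFq
  have hGdeg : G.natDegree = F.natDegree := by
    rw [natDegree_comp, natDegree_C_mul_X q hq, mul_one]
  have hGF : G.comp (C q⁻¹ * X) = F := by
    rw [comp_assoc, mul_comp, C_comp, X_comp, ← mul_assoc, ← C_mul, mul_inv_cancel₀ hq, C_1,
      one_mul, comp_X]
  have hF1 := Padic.supNorm_eq_one_of_derivative_dvd h0 hF.2.1 hF.2.2 hpos hdeg
  have hG1 := Padic.supNorm_eq_one_of_derivative_dvd (by simpa [G] using h0) hG.2.1 hG.2.2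
    (hGdeg ▸ hpos) (hGdeg ▸ hdeg)
  refine le_antisymm (norm_le_one_of_supNorm_comp_C_mul_X_le_one ?_ hF1.ge hG1.le) ?_
  · rwa [coeff_zero_eq_eval_zero]
  · have := norm_le_one_of_supNorm_comp_C_mul_X_le_one (q := q⁻¹) ?_ hG1.ge (hGF ▸ hF1.le)
    · rwa [norm_inv, inv_le_one₀ (norm_pos_iff.2 hq)] at this
    · simpa [G, coeff_zero_eq_eval_zero] using h0

/-- If `B ∈ ℚ[X]` is a nonconstant Belyi polynomial and `q` is a nonzero rational with
nonzero `p`-adic valuation, and `B q ∈ {0,1}`, then `deg B ≥ p`. -/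
theorem belyi_height_ge_prime_rat (p : ℕ) (hp : p.Prime)
    (B : ℚ[X]) (hB : IsBelyi B) (hBdeg : 0 < B.natDegree)
    (q : ℚ) (hq : q ≠ 0) (hval : padicValRat p q ≠ 0)
    (hBq : B.eval q ∈ ({0, 1} : Set ℚ)) :
    p ≤ B.natDegree := by
  have : Fact p.Prime := ⟨hp⟩
  by_contra! hlt
  let φ := Rat.castHom ℚ_[p]
  have hBq' : (B.map φ).eval (φ q) ∈ ({0, 1} : Set ℚ_[p]) := by
    rw [eval_map, eval₂_at_apply]
    rcases hBq with h | h <;> simp_all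
  have hnorm := (hB.map φ).norm_eq_one (by rwa [natDegree_map]) (by rwa [natDegree_map])
    (by simpa [φ] using hq) hBq'
  rw [Padic.norm_eq_zpow_neg_valuation (by simpa [φ] using hq), show φ q = (q : ℚ_[p]) from rfl,
    Padic.valuation_ratCast, zpow_eq_one_iff_right₀ (by positivity)
      (by exact_mod_cast hp.one_lt.ne'), neg_eq_zero] at hnorm
  exact hval hnorm
end

section
/- If B ∈ K[X] is a Belyi polynomial with 1 ≤ deg B < p and B(0) = 0, then New(B) ⊆ New(B−1), i.e. the Newton polygon of B is contained in the Newton polygon of B−1. -/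
open Polynomial

/-- The set of points `(i, -log v aᵢ)` attached to the nonzero coefficients `aᵢ` of `f`. -/
def coeffPoints {K : Type*} [Field K] (v : Valuation K NNReal) (f : K[X]) : Set (ℝ × ℝ) :=
  {z | ∃ i : ℕ, f.coeff i ≠ 0 ∧ z = ((i : ℝ), -Real.log (v (f.coeff i) : ℝ))}

/-- The Newton polygon of `f` with respect to `v`: the lower boundary of the convex hull
of `coeffPoints v f`. -/
def newtonPolygon {K : Type*} [Field K] (v : Valuation K NNReal) (f : K[X]) : Set (ℝ × ℝ) :=
  {z ∈ convexHull ℝ (coeffPoints v f) |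
    ∀ w ∈ convexHull ℝ (coeffPoints v f), w.1 = z.1 → z.2 ≤ w.2}

/-!
Write `|·|` for `v` and `|f|_r` for the Gauss norm of `f` at radius `r`; it is multiplicative,
and it equals `|f(0)|` when `r` is at most the absolute value of every root of `f`. Let
`B * (B - 1) = B' * C` and let `m` be the order of `B` at `0`. Since `deg B < p`, the integers
`1, …, deg B` are units, so `|B|_r = r |B'|_r` and therefore `|C|_r = r |B - 1|_r`. Let `σ` be
the least absolute value of a root `β` of `B - 1`. On `(0, σ]` we get `|B - 1|_r = 1`, hence
`|C / X|_r = 1`; as every root of `B` is a root of `C`, no nonzero root of `B` has absolute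
value below `σ`. So `|B|_r = |a_m| r ^ m` for `r ≤ σ`, while `|B|_σ ≥ |B(β)| = 1`. At the radius
where `|a_m| r ^ m = 1` this gives `|a_j| ^ m ≤ |a_m| ^ j`: all coefficient points of `B` lie on
or above the line through the origin and the point of index `m`. The coefficient points of
`B - 1` are those of `B` plus the origin, and adding the origin does not change the lower
boundary of the convex hull from index `m` on.
-/

theorem pow_le_pow_of_forall_mul_pow_le {x y σ : ℝ} {j m : ℕ} (hm : m ≠ 0) (hx : 0 ≤ x)
    (hy : 0 < y) (hσ : 0 < σ) (hyσ : 1 ≤ y * σ ^ m)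
    (h : ∀ r ∈ Set.Ioc 0 σ, x * r ^ j ≤ y * r ^ m) :
    x ^ m ≤ y ^ j := by
  set r := y ^ (-(m : ℝ)⁻¹)
  have hr : 0 < r := Real.rpow_pos_of_pos hy _
  have hrm : r ^ m = y⁻¹ := by
    rw [← Real.rpow_natCast, ← Real.rpow_mul hy.le, neg_mul,
      inv_mul_cancel₀ (Nat.cast_ne_zero.mpr hm), Real.rpow_neg_one]
  have hrσ : r ≤ σ := by
    refine (pow_le_pow_iff_left₀ hr.le hσ.le hm).mp ?_
    rw [hrm, inv_le_iff_one_le_mul₀' hy]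
    exact hyσ
  have hxr : x * r ^ j ≤ 1 := by
    simpa [hrm, hy.ne'] using h r ⟨hr, hrσ⟩
  calc x ^ m = (x * r ^ j) ^ m * y ^ j := by
        rw [mul_pow, ← pow_mul, mul_comm j m, pow_mul, hrm, inv_pow, mul_assoc,
          inv_mul_cancel₀ (pow_ne_zero _ hy.ne'), mul_one]
    _ ≤ 1 * y ^ j := by gcongr; exact pow_le_one₀ (by positivity) hxr
    _ = y ^ j := one_mul _

namespace Valuation

variable {K : Type*} [Field K] (v : Valuation K NNReal)

noncomputable def toAbsoluteValue : AbsoluteValue K ℝ where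
  toFun x := v x
  map_mul' x y := by simp
  nonneg' x := (v x).coe_nonneg
  eq_zero' x := by simp
  add_le' x y := by
    exact_mod_cast (v.map_add x y).trans (max_le_add_of_nonneg zero_le zero_le)

theorem isNonarchimedean_toAbsoluteValue : IsNonarchimedean v.toAbsoluteValue := fun x y =>
  mod_cast v.map_add x y

end Valuation

namespace IsNonarchimedean

variable {K : Type*} [Field K] {v : AbsoluteValue K ℝ}

theorem apply_natCast_eq_one (hna : IsNonarchimedean v) {p : ℕ} (hp : p.Prime) (hvp : v p < 1)
    {k : ℕ} (hk : ¬ p ∣ k) : v k = 1 := by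
  refine le_antisymm hna.apply_natCast_le_one (not_lt.mp fun hvk => ?_)
  obtain ⟨a, b, hab⟩ := (Nat.isCoprime_iff_coprime.mpr ((hp.coprime_iff_not_dvd).mpr hk))
  have h1 : (1 : K) = a * p + b * k := by exact_mod_cast congrArg (Int.cast (R := K)) hab.symm
  have : v 1 < 1 := by
    rw [h1]
    refine (hna _ _).trans_lt (max_lt ?_ ?_) <;> rw [map_mul]
    · exact mul_lt_one_of_nonneg_of_lt_one_right hna.apply_intCast_le_one (v.nonneg _) hvp
    · exact mul_lt_one_of_nonneg_of_lt_one_right hna.apply_intCast_le_one (v.nonneg _) hvk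
  simp at this

end IsNonarchimedean

namespace Polynomial

variable {K : Type*} [Field K] {v : AbsoluteValue K ℝ}

theorem gaussNorm_X (r : ℝ) : (X : K[X]).gaussNorm v r = r := by
  rw [← monomial_one_one_eq_X, gaussNorm_monomial, map_one, one_mul, pow_one]

theorem gaussNorm_X_sub_C (hna : IsNonarchimedean v) {r : ℝ} (hr : 0 ≤ r) (a : K) :
    (X - C a).gaussNorm v r = max r (v a) := by
  refine le_antisymm ?_ (max_le ?_ ?_)
  · have h := isNonarchimedean_gaussNorm v hna hr X (C (-a))
    rwa [gaussNorm_C, C_neg, ← sub_eq_add_neg, gaussNorm_X, map_neg_eq_map v] at h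
  · have h := (X - C a).le_gaussNorm v hr 1
    rwa [coeff_sub, coeff_X_one, coeff_C_succ, sub_zero, map_one, one_mul, pow_one] at h
  · have h := (X - C a).le_gaussNorm v hr 0
    rwa [coeff_sub, coeff_X_zero, coeff_C_zero, zero_sub, map_neg_eq_map, pow_zero, mul_one] at h

theorem gaussNorm_mono (f : K[X]) {r s : ℝ} (hr : 0 ≤ r) (hrs : r ≤ s) :
    f.gaussNorm v r ≤ f.gaussNorm v s := by
  obtain ⟨i, hi⟩ := f.exists_eq_gaussNorm v r
  rw [hi]
  exact le_trans (by gcongr) (f.le_gaussNorm v (hr.trans hrs) i)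

theorem abv_eval_le_gaussNorm (hna : IsNonarchimedean v) (f : K[X]) (x : K) :
    v (f.eval x) ≤ f.gaussNorm v (v x) := by
  rw [eval_eq_sum_range]
  obtain ⟨i, -, hi⟩ := hna.finset_image_add_of_nonempty (fun i => f.coeff i * x ^ i)
    (Finset.nonempty_range_add_one (n := f.natDegree))
  rw [map_mul, map_pow] at hi
  exact hi.trans (f.le_gaussNorm v (v.nonneg x) i)

theorem gaussNorm_pos {f : K[X]} (hf : f ≠ 0) {r : ℝ} (hr : 0 < r) : 0 < f.gaussNorm v r :=
  (f.gaussNorm_nonneg v hr.le).lt_of_ne'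
    (mt (gaussNorm_eq_zero_iff v f (fun _ => v.eq_zero.mp) hr).mp hf)


theorem natTrailingDegree_ne_zero_of_eval_zero {f : K[X]} (hf : f ≠ 0) (h0 : f.eval 0 = 0) :
    f.natTrailingDegree ≠ 0 := by
  simpa [hf, coeff_zero_eq_eval_zero] using h0

theorem gaussNorm_eq_abv_eval_zero [IsAlgClosed K] (hna : IsNonarchimedean v) {r : ℝ}
    (hr : 0 < r) {f : K[X]} (hf : ∀ a ∈ f.roots, r ≤ v a) :
    f.gaussNorm v r = v (f.eval 0) := by
  have := gaussNorm_isAbsoluteValue (c := r) hna hr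
  have hfac :=
    C_leadingCoeff_mul_prod_multiset_X_sub_C (p := f) IsAlgClosed.card_roots_eq_natDegree
  have hX : ∀ a ∈ f.roots, (X - C a).gaussNorm v r = v (-a) := fun a ha => by
    rw [gaussNorm_X_sub_C hna hr.le, max_eq_right (hf a ha), map_neg_eq_map]
  calc f.gaussNorm v r = IsAbsoluteValue.abvHom (gaussNorm v r) f := rfl
    _ = v f.leadingCoeff * (f.roots.map fun a => v (-a)).prod := by
      conv_lhs => rw [← hfac]
      rw [map_mul, map_multiset_prod, Multiset.map_map]
      exact congr_arg₂ _ (gaussNorm_C v r _) (congrArg _ (Multiset.map_congr rfl hX))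
    _ = v (f.eval 0) := by
      conv_rhs => rw [← hfac]
      simp [eval_multiset_prod, map_multiset_prod, Multiset.map_map]

theorem gaussNorm_eq_abv_trailingCoeff_mul_pow [IsAlgClosed K] (hna : IsNonarchimedean v) {r : ℝ}
    (hr : 0 < r) {f : K[X]} (hf : ∀ a ∈ f.roots, a ≠ 0 → r ≤ v a) :
    f.gaussNorm v r = v f.trailingCoeff * r ^ f.natTrailingDegree := by
  rcases eq_or_ne f 0 with rfl | hf0
  · simp
  obtain ⟨g, hfg, hg⟩ := f.exists_eq_pow_rootMultiplicity_mul_and_not_dvd hf0 0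
  rw [map_zero, sub_zero, rootMultiplicity_eq_natTrailingDegree'] at hfg
  generalize hm : f.natTrailingDegree = m at hfg
  rw [map_zero, sub_zero, X_dvd_iff] at hg
  have hg0 : g.eval 0 ≠ 0 := by rwa [← coeff_zero_eq_eval_zero]
  have hgroots : ∀ a ∈ g.roots, r ≤ v a := fun a ha => by
    have hga := (mem_roots'.mp ha).2
    refine hf a ((mem_roots hf0).mpr ?_) (by rintro rfl; exact hg0 hga)
    rw [hfg, IsRoot, eval_mul, hga, mul_zero]
  have htrail : f.trailingCoeff = g.eval 0 := by
    rw [trailingCoeff, hm, hfg, coeff_X_pow_mul', if_pos le_rfl, Nat.sub_self,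
      coeff_zero_eq_eval_zero]
  rw [htrail, hfg, gaussNorm_mul hna hr, ← monomial_one_right_eq_X_pow, gaussNorm_monomial,
    map_one, one_mul, gaussNorm_eq_abv_eval_zero hna hr hgroots, mul_comm]

theorem IsRoot.le_abv_of_gaussNorm_eq (hna : IsNonarchimedean v) {f : K[X]} (hf : f ≠ 0) {α : K}
    (hα : f.IsRoot α) (hα0 : α ≠ 0) {σ : ℝ}
    (hconst : ∀ r ∈ Set.Ioc 0 σ, f.gaussNorm v r = f.gaussNorm v σ) :
    σ ≤ v α := by
  by_contra! hlt
  have hvα : 0 < v α := v.pos hα0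
  set g := f /ₘ (X - C α)
  have hfg : (X - C α) * g = f := mul_divByMonic_eq_iff_isRoot.mpr hα
  have hg : g ≠ 0 := by rintro hg; rw [hg, mul_zero] at hfg; exact hf hfg.symm
  have key := hconst (v α) ⟨hvα, hlt.le⟩
  rw [← hfg, gaussNorm_mul hna hvα, gaussNorm_mul hna (hvα.trans hlt),
    gaussNorm_X_sub_C hna hvα.le, gaussNorm_X_sub_C hna (hvα.trans hlt).le, max_self,
    max_eq_left hlt.le] at key
  have := gaussNorm_pos (v := v) hg hvα
  have := g.gaussNorm_mono (v := v) hvα.le hlt.le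
  nlinarith

theorem gaussNorm_eq_mul_gaussNorm_derivative (hna : IsNonarchimedean v) {f : K[X]}
    (hf0 : f.coeff 0 = 0) (hunit : ∀ k : ℕ, 0 < k → k ≤ f.natDegree → v k = 1) {r : ℝ}
    (hr : 0 ≤ r) : f.gaussNorm v r = r * f.derivative.gaussNorm v r := by
  refine le_antisymm ?_ ?_
  · obtain ⟨_ | i, hi⟩ := f.exists_eq_gaussNorm v r
    · rw [hi, hf0, map_zero, zero_mul]
      exact mul_nonneg hr (gaussNorm_nonneg _ _ hr)
    · have hcoeff : v (f.coeff (i + 1)) = v (f.derivative.coeff i) := by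
        rw [coeff_derivative, map_mul]
        rcases le_or_gt (i + 1) f.natDegree with hi | hi
        · rw [← Nat.cast_succ, hunit _ i.succ_pos hi, mul_one]
        · rw [coeff_eq_zero_of_natDegree_lt hi, map_zero, zero_mul]
      calc f.gaussNorm v r = r * (v (f.derivative.coeff i) * r ^ i) := by rw [hi, hcoeff]; ring
        _ ≤ r * f.derivative.gaussNorm v r := by gcongr; exact f.derivative.le_gaussNorm v hr i
  · obtain ⟨i, hi⟩ := f.derivative.exists_eq_gaussNorm v r
    rw [hi, coeff_derivative, map_mul, ← Nat.cast_succ]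
    calc r * (v (f.coeff (i + 1)) * v ((i + 1 : ℕ) : K) * r ^ i)
        ≤ r * (v (f.coeff (i + 1)) * 1 * r ^ i) := by
          gcongr; exact hna.apply_natCast_le_one
      _ = v (f.coeff (i + 1)) * r ^ (i + 1) := by ring
      _ ≤ f.gaussNorm v r := f.le_gaussNorm v hr _

section Belyi

variable [CharZero K] {B C : K[X]}

theorem IsRoot.of_derivative_mul_eq_mul {f g h : K[X]} (hf : f ≠ 0)
    (heq : derivative f * g = f * h) {a : K} (hfa : f.IsRoot a) (hha : ¬ h.IsRoot a) :
    g.IsRoot a := by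
  have hfh : f * h ≠ 0 := mul_ne_zero hf (by rintro rfl; exact hha (by simp))
  have hmul := congrArg (rootMultiplicity a) heq
  rw [rootMultiplicity_mul (heq ▸ hfh), rootMultiplicity_mul hfh, rootMultiplicity_eq_zero hha,
    derivative_rootMultiplicity_of_root hfa] at hmul
  have := (rootMultiplicity_pos hf).mpr hfa
  exact (rootMultiplicity_pos (right_ne_zero_of_mul (heq ▸ hfh))).mp (by omega)

theorem derivative_ne_zero_of_eval_zero (hB : B ≠ 0) (h0 : B.eval 0 = 0) : derivative B ≠ 0 :=
  fun hd => hB <| by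
    rw [eq_C_of_natDegree_eq_zero (derivative_eq_zero.mp hd),
      coeff_zero_eq_eval_zero, h0, C_0]

theorem gaussNorm_eq_mul_gaussNorm_sub_one (hna : IsNonarchimedean v)
    (hBC : derivative B * C = B * (B - 1)) (hB : B ≠ 0) (h0 : B.eval 0 = 0)
    (hunit : ∀ k : ℕ, 0 < k → k ≤ B.natDegree → v k = 1)
    {r : ℝ} (hr : 0 < r) : C.gaussNorm v r = r * (B - 1).gaussNorm v r := by
  have h := congrArg (gaussNorm v r) hBC
  rw [gaussNorm_mul hna hr, gaussNorm_mul hna hr, gaussNorm_eq_mul_gaussNorm_derivative hna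
    (by rwa [coeff_zero_eq_eval_zero]) hunit hr.le, mul_comm r, mul_assoc] at h
  exact mul_left_cancel₀ (gaussNorm_pos (derivative_ne_zero_of_eval_zero hB h0) hr).ne' h

theorem le_abv_of_isRoot_of_belyi [IsAlgClosed K] (hna : IsNonarchimedean v)
    (hBC : derivative B * C = B * (B - 1)) (hB : B ≠ 0) (h0 : B.eval 0 = 0)
    (hunit : ∀ k : ℕ, 0 < k → k ≤ B.natDegree → v k = 1) {σ : ℝ} (hσ : 0 < σ)
    (hroots : ∀ β ∈ (B - 1).roots, σ ≤ v β)
    {α : K} (hα : B.IsRoot α) (hα0 : α ≠ 0) :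
    σ ≤ v α := by
  have hC : ∀ x, B.IsRoot x → C.IsRoot x := fun x hx =>
    hx.of_derivative_mul_eq_mul hB hBC (by simp [hx.eq_zero])
  obtain ⟨C₁, rfl⟩ : X ∣ C := by simpa using dvd_iff_isRoot.mpr (hC 0 h0)
  have hC₁ : ∀ r ∈ Set.Ioc 0 σ, C₁.gaussNorm v r = 1 := by
    rintro r ⟨hr, hrσ⟩
    have h := gaussNorm_eq_mul_gaussNorm_sub_one hna hBC hB h0 hunit hr
    rw [gaussNorm_mul hna hr, gaussNorm_X, gaussNorm_eq_abv_eval_zero hna hr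
      fun β hβ => hrσ.trans (hroots β hβ)] at h
    simpa [h0, hr.ne'] using h
  have hC₁0 : C₁ ≠ 0 := by
    rintro rfl
    simpa using hC₁ σ ⟨hσ, le_rfl⟩
  have hαC₁ : C₁.IsRoot α := by simpa [hα0] using hC α hα
  exact hαC₁.le_abv_of_gaussNorm_eq hna hC₁0 hα0 fun r hr => by
    rw [hC₁ r hr, hC₁ σ ⟨hσ, le_rfl⟩]

theorem abv_coeff_pow_natTrailingDegree_le_of_belyi [IsAlgClosed K] (hna : IsNonarchimedean v)
    (hBC : derivative B * C = B * (B - 1)) (hB : B ≠ 0) (h0 : B.eval 0 = 0)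
    (hunit : ∀ k : ℕ, 0 < k → k ≤ B.natDegree → v k = 1) (j : ℕ) :
    v (B.coeff j) ^ B.natTrailingDegree ≤ v B.trailingCoeff ^ j := by
  classical
  have hm := natTrailingDegree_ne_zero_of_eval_zero hB h0
  have hdeg : 0 < (B - 1).degree := by
    rw [← C_1, degree_sub_C] <;>
      exact natDegree_pos_iff_degree_pos.mp ((Nat.pos_of_ne_zero hm).trans_le
        (natTrailingDegree_le_natDegree B))
  obtain ⟨β₀, hβ₀⟩ := IsAlgClosed.exists_root _ hdeg.ne'
  obtain ⟨β, hβ, hβmin⟩ := (B - 1).roots.toFinset.exists_min_image v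
    ⟨β₀, Multiset.mem_toFinset.mpr ((mem_roots (ne_zero_of_degree_gt hdeg)).mpr hβ₀)⟩
  have hβroot : (B - 1).IsRoot β := isRoot_of_mem_roots (Multiset.mem_toFinset.mp hβ)
  have hσ : 0 < v β := v.pos <| by rintro rfl; simp [h0] at hβroot
  have hnear : ∀ r ∈ Set.Ioc 0 (v β),
      B.gaussNorm v r = v B.trailingCoeff * r ^ B.natTrailingDegree := fun r hr =>
    gaussNorm_eq_abv_trailingCoeff_mul_pow hna hr.1 fun α hα hα0 =>
      hr.2.trans <| le_abv_of_isRoot_of_belyi hna hBC hB h0 hunit hσ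
        (fun β' hβ' => hβmin β' (Multiset.mem_toFinset.mpr hβ')) (isRoot_of_mem_roots hα) hα0
  have hone : 1 ≤ v B.trailingCoeff * v β ^ B.natTrailingDegree := by
    have h := abv_eval_le_gaussNorm hna B β
    rwa [show B.eval β = 1 by simpa [sub_eq_zero] using hβroot, map_one,
      hnear _ ⟨hσ, le_rfl⟩] at h
  exact pow_le_pow_of_forall_mul_pow_le hm (v.nonneg _)
    (v.pos (trailingCoeff_nonzero_iff_nonzero.mpr hB)) hσ hone
    fun r hr => hnear r hr ▸ B.le_gaussNorm v hr.1.le j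

end Belyi

end Polynomial

def lowerBoundary (A : Set (ℝ × ℝ)) : Set (ℝ × ℝ) :=
  {z ∈ A | ∀ w ∈ A, w.1 = z.1 → z.2 ≤ w.2}

theorem newtonPolygon_eq_lowerBoundary {K : Type*} [Field K] (v : Valuation K NNReal) (f : K[X]) :
    newtonPolygon v f = lowerBoundary (convexHull ℝ (coeffPoints v f)) := rfl

section LowerBoundary

variable {S : Set (ℝ × ℝ)} {m ν : ℝ}

theorem convexHull_subset_of_forall_le (hS : ∀ q ∈ S, m ≤ q.1 ∧ ν * q.1 ≤ m * q.2) :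
    convexHull ℝ S ⊆ {q | m ≤ q.1 ∧ ν * q.1 ≤ m * q.2} := by
  refine convexHull_min hS ?_
  rintro q ⟨hq₁, hq₂⟩ q' ⟨hq₁', hq₂'⟩ a b ha hb hab
  simp only [Set.mem_ofPred_eq, Prod.fst_add, Prod.snd_add, Prod.smul_fst, Prod.smul_snd,
    smul_eq_mul]
  have hmab : a * m + b * m = m := by rw [← add_mul, hab, one_mul]
  constructor
  · nlinarith [mul_le_mul_of_nonneg_left hq₁ ha, mul_le_mul_of_nonneg_left hq₁' hb]
  · nlinarith [mul_le_mul_of_nonneg_left hq₂ ha, mul_le_mul_of_nonneg_left hq₂' hb]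

theorem exists_mem_convexHull_of_mem_convexHull_insert_zero (hm : 0 < m) (hP : (m, ν) ∈ S)
    (hS : ∀ q ∈ convexHull ℝ S, m ≤ q.1 ∧ ν * q.1 ≤ m * q.2) {w : ℝ × ℝ}
    (hw : w ∈ convexHull ℝ (insert 0 S)) (hwm : m ≤ w.1) :
    ∃ q ∈ convexHull ℝ S, q.1 = w.1 ∧ q.2 ≤ w.2 := by
  rw [convexHull_insert ⟨_, hP⟩, convexJoin_singleton_left, Set.mem_iUnion₂] at hw
  obtain ⟨u, hu, a, b, ha, hb, hab, rfl⟩ := hw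
  obtain ⟨hu₁, hu₂⟩ := hS u hu
  simp only [smul_zero, zero_add, Prod.smul_fst, Prod.smul_snd, smul_eq_mul] at hwm ⊢
  set θ := (u.1 - b * u.1) / (u.1 - m)
  have hθ : θ * (u.1 - m) = u.1 - b * u.1 := by
    rcases eq_or_lt_of_le hu₁ with h | h
    · rw [← h, sub_self, mul_zero]; nlinarith
    · exact div_mul_cancel₀ _ (sub_pos.mpr h).ne'
  have hθ₀ : 0 ≤ θ := div_nonneg (by nlinarith) (by linarith)
  have hθ₁ : θ ≤ 1 := div_le_one_of_le₀ (by linarith) (by linarith)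
  have hq : θ • (m, ν) + (1 - θ) • u ∈ convexHull ℝ S :=
    convex_convexHull ℝ S (subset_convexHull ℝ S hP) hu hθ₀ (by linarith) (by ring)
  refine ⟨_, hq, ?_, ?_⟩
  · simp only [Prod.fst_add, Prod.smul_fst, smul_eq_mul]
    linarith
  · have hcoef : (θ - 1 + b) * u.1 = θ * m := by linear_combination hθ
    have hcoef₀ : 0 ≤ θ - 1 + b := by nlinarith
    have key :
        m * (b * u.2 - (θ * ν + (1 - θ) * u.2)) = (θ - 1 + b) * (m * u.2 - ν * u.1) := by
      linear_combination ν * hcoef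
    simp only [Prod.snd_add, Prod.smul_snd, smul_eq_mul]
    nlinarith [mul_nonneg hcoef₀ (sub_nonneg.mpr hu₂)]

theorem lowerBoundary_convexHull_subset_insert_zero (hm : 0 < m) (hP : (m, ν) ∈ S)
    (hS : ∀ q ∈ S, m ≤ q.1 ∧ ν * q.1 ≤ m * q.2) :
    lowerBoundary (convexHull ℝ S) ⊆ lowerBoundary (convexHull ℝ (insert 0 S)) := by
  have hH := convexHull_subset_of_forall_le hS
  rintro z ⟨hz, hzmin⟩
  refine ⟨convexHull_mono (Set.subset_insert _ _) hz, fun w hw hwz => ?_⟩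
  obtain ⟨q, hq, hq₁, hq₂⟩ :=
    exists_mem_convexHull_of_mem_convexHull_insert_zero hm hP hH hw (hwz ▸ (hH hz).1)
  exact (hzmin q hq (hq₁.trans hwz)).trans hq₂

end LowerBoundary

section CoeffPoints

variable {K : Type*} [Field K] (v : Valuation K NNReal) {f : K[X]}

theorem coeffPoints_sub_one (h0 : f.coeff 0 = 0) :
    coeffPoints v (f - 1) = insert 0 (coeffPoints v f) := by
  have hcoeff (i : ℕ) (hi : i ≠ 0) : (f - 1).coeff i = f.coeff i := by simp [coeff_one, hi]
  ext z
  simp only [coeffPoints, Set.mem_insert_iff, Set.mem_ofPred_eq]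
  constructor
  · rintro ⟨i, hi, rfl⟩
    rcases eq_or_ne i 0 with rfl | hi0
    · left; simp [h0]
    · right; exact ⟨i, hcoeff i hi0 ▸ hi, by rw [hcoeff i hi0]⟩
  · rintro (rfl | ⟨i, hi, rfl⟩)
    · exact ⟨0, by simp [h0], by simp [h0]; rfl⟩
    · have hi0 : i ≠ 0 := by rintro rfl; exact hi h0
      exact ⟨i, (hcoeff i hi0).symm ▸ hi, by rw [hcoeff i hi0]⟩

theorem trailingCoeff_mem_coeffPoints (hf : f ≠ 0) :
    ((f.natTrailingDegree : ℝ), -Real.log (v f.trailingCoeff)) ∈ coeffPoints v f :=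
  ⟨_, trailingCoeff_nonzero_iff_nonzero.mpr hf, rfl⟩

theorem coeffPoints_subset_of_pow_le
    (hf : ∀ j, (v (f.coeff j) : ℝ) ^ f.natTrailingDegree ≤ (v f.trailingCoeff : ℝ) ^ j) :
    ∀ q ∈ coeffPoints v f, (f.natTrailingDegree : ℝ) ≤ q.1 ∧
      -Real.log (v f.trailingCoeff) * q.1 ≤ f.natTrailingDegree * q.2 := by
  rintro _ ⟨i, hi, rfl⟩
  refine ⟨Nat.cast_le.mpr (natTrailingDegree_le_of_ne_zero hi), ?_⟩
  have hlog := Real.log_le_log (pow_pos (NNReal.coe_pos.mpr (v.pos_iff.mpr hi)) _) (hf i)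
  rw [Real.log_pow, Real.log_pow] at hlog
  linarith

end CoeffPoints

theorem newtonPolygon_belyi_subset_general {K : Type*} [Field K] [IsAlgClosed K] [CharZero K]
    (p : ℕ) (hp : p.Prime) (v : Valuation K NNReal)
    (hvp1 : v (p : K) < 1)
    (B : K[X]) (hB : IsBelyi B) (hBdeg : 1 ≤ B.natDegree) (hBdeg' : B.natDegree < p)
    (h0 : B.eval 0 = 0) :
    newtonPolygon v B ⊆ newtonPolygon v (B - 1) := by
  obtain ⟨-, -, C, hC⟩ := hB
  have hB0 : B ≠ 0 := by rintro rfl; simp at hBdeg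
  have hna := v.isNonarchimedean_toAbsoluteValue
  have hunit (k : ℕ) (hk : 0 < k) (hkB : k ≤ B.natDegree) : v.toAbsoluteValue k = 1 :=
    hna.apply_natCast_eq_one hp (NNReal.coe_lt_one.mpr hvp1)
      (Nat.not_dvd_of_pos_of_lt hk (hkB.trans_lt hBdeg'))
  have hbound := abv_coeff_pow_natTrailingDegree_le_of_belyi hna hC.symm hB0 h0 hunit
  rw [newtonPolygon_eq_lowerBoundary, newtonPolygon_eq_lowerBoundary,
    coeffPoints_sub_one v (by rwa [coeff_zero_eq_eval_zero])]
  exact lowerBoundary_convexHull_subset_insert_zero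
    (by exact_mod_cast Nat.pos_of_ne_zero (natTrailingDegree_ne_zero_of_eval_zero hB0 h0))
    (trailingCoeff_mem_coeffPoints v hB0) (coeffPoints_subset_of_pow_le v hbound)

/-- If `B` is a Belyi polynomial with `1 ≤ deg B < p` and `B 0 = 0`, then the Newton
polygon of `B` is contained in the Newton polygon of `B - 1`. -/
theorem newtonPolygon_belyi_subset {K : Type*} [Field K] [IsAlgClosed K] [CharZero K]
    (p : ℕ) (hp : p.Prime) (v : Valuation K NNReal)
    (hvp0 : 0 < v (p : K)) (hvp1 : v (p : K) < 1)
    (B : K[X]) (hB : IsBelyi B) (hBdeg : 1 ≤ B.natDegree) (hBdeg' : B.natDegree < p)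
    (h0 : B.eval 0 = 0) :
    newtonPolygon v B ⊆ newtonPolygon v (B - 1) :=
  newtonPolygon_belyi_subset_general p hp v hvp1 B hB hBdeg hBdeg' h0
end

section
/- If B ∈ K[X] is a Belyi polynomial with 1 ≤ deg B = n < p, B(0) = 0, and leading coefficient aₙ, then New(B−1) is a single line segment: New(B−1) equals the segment in ℝ² joining (0,0) to (n, −log v(aₙ)). Equivalently, every coefficient bᵢ of B−1 satisfies v(bᵢ)ⁿ ≤ v(aₙ)ⁱ, i.e. −log v(bᵢ) ≥ (i/n)·(−log v(aₙ)). -/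
open Polynomial

/-!
Let `a` be the leading coefficient of `B`, `n` its degree and `c` a root of `B (B - 1)` of
largest valuation. If `v a * v c ^ n ≤ 1`, the ultrametric bound on the elementary symmetric
functions of the roots of `B - 1 = a ∏ (X - β)` gives `v bᵢ ^ n ≤ v a ^ i`, so every point of the
Newton polygon lies on or above the line through `(0, 0)` and `(n, -log v a)`, which are
themselves points of it.

Otherwise `ε = (a cⁿ)⁻¹` has `v ε < 1`, and `f = ε B(cX)`, `g = f - ε` are monic with integral
roots, with `f'` dividing `f g`. Since `n < p`, a root of multiplicity `m` of the reduction
`f̄ = ḡ` is a root of multiplicity exactly `m - 1` of `f̄' = n ∏ (X - δ̄)`, and every `δ̄` is a root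
of `f̄`. Counting degrees, `f̄` has a single root; but `0` and `1` are both roots of `f g`.
-/

theorem Polynomial.map_multiset_prod_X_sub_C_s3 {R S : Type*} [CommRing R] [CommRing S]
    (φ : R →+* S) (s : Multiset R) :
    ((s.map fun x => X - C x).prod).map φ = ((s.map φ).map fun x => X - C x).prod := by
  simp [Polynomial.map_multiset_prod, Multiset.map_map]

theorem Polynomial.natDegree_sub_one {R : Type*} [Ring R] (p : R[X]) :
    (p - 1).natDegree = p.natDegree := by
  rw [← C_1, natDegree_sub_C]

theorem Polynomial.leadingCoeff_sub_one {R : Type*} [Ring R] [Nontrivial R] {p : R[X]}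
    (hp : 0 < p.natDegree) : (p - 1).leadingCoeff = p.leadingCoeff :=
  leadingCoeff_sub_of_degree_lt (by rw [degree_one]; exact natDegree_pos_iff_degree_pos.mp hp)

theorem Polynomial.monic_C_inv_mul_comp_C_mul_X {F : Type*} [Field F] {P : F[X]} (hP : P ≠ 0)
    {c : F} (hc : c ≠ 0) : (C (P.leadingCoeff * c ^ P.natDegree)⁻¹ * P.comp (C c * X)).Monic := by
  rw [Monic, leadingCoeff_mul, leadingCoeff_C, leadingCoeff_comp (by simp [hc]),
    leadingCoeff_C_mul_X,
    inv_mul_cancel₀ (mul_ne_zero (leadingCoeff_ne_zero.mpr hP) (pow_ne_zero _ hc))]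

theorem Polynomial.derivative_C_mul_comp_C_mul_X_dvd {F : Type*} [Field F] {P Q : F[X]}
    (h : derivative P ∣ Q) {u c : F} (hu : u ≠ 0) (hc : c ≠ 0) :
    derivative (C u * P.comp (C c * X)) ∣ Q.comp (C c * X) := by
  rw [derivative_C_mul, derivative_comp, derivative_C_mul, derivative_X, mul_one, ← mul_assoc,
    ← C_mul, (isUnit_C.mpr (mul_ne_zero hu hc).isUnit).mul_left_dvd]
  exact _root_.map_dvd (compRingHom (C c * X)) h

theorem Multiset.eq_of_mem_of_derivative_prod_X_sub_C {k : Type*} [Field k] [DecidableEq k]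
    {s d : Multiset k} {a : k} (ha : a ≠ 0)
    (hder : derivative (s.map fun x => X - C x).prod = C a * (d.map fun x => X - C x).prod)
    (hcard : card d + 1 = card s) (hsub : ∀ x ∈ d, x ∈ s)
    (hmult : ∀ x ∈ s, (s.count x : k) ≠ 0) {x y : k} (hx : x ∈ s) (hy : y ∈ s) : x = y := by
  -- Multiplicities are nonzero in `k`, so each drops by exactly one in the derivative.
  have hcount (z : k) : d.count z = s.count z - s.dedup.count z := by
    rw [count_dedup]
    split_ifs with hz
    · have hroot : IsRoot (s.map fun x => X - C x).prod z := by
        rw [← mem_roots (monic_multiset_prod_of_monic _ _ fun x _ => monic_X_sub_C x).ne_zero,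
          roots_multiset_prod_X_sub_C]
        exact hz
      have := derivative_rootMultiplicity_of_root_of_mem_nonZeroDivisors hroot (by
        rw [← count_roots, roots_multiset_prod_X_sub_C]
        exact mem_nonZeroDivisors_of_ne_zero (hmult z hz))
      rwa [hder, ← count_roots, ← count_roots, roots_C_mul _ ha, roots_multiset_prod_X_sub_C,
        roots_multiset_prod_X_sub_C] at this
    · rw [count_eq_zero.mpr hz, count_eq_zero.mpr fun h => hz (hsub z h)]
  have hd : d = s - s.dedup := ext.mpr fun z => by rw [count_sub, hcount]
  have hdedup : card s.dedup = 1 := by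
    have := congrArg card hd
    rw [card_sub (dedup_le s)] at this
    have := card_le_card (dedup_le s)
    omega
  obtain ⟨z, hz⟩ := card_eq_one.mp hdedup
  rw [← mem_dedup, hz, mem_singleton] at hx hy
  rw [hx, hy]

theorem Prod.mem_segment_zero_iff {a b : ℝ} {z : ℝ × ℝ} :
    z ∈ segment ℝ (0, 0) (a, b) ↔ ∃ t ∈ Set.Icc (0 : ℝ) 1, z = (t * a, t * b) := by
  rw [segment_eq_image']
  simp [eq_comm]

theorem lowerBoundary_convexHull_eq_segment {S : Set (ℝ × ℝ)} {a b : ℝ} (ha : 0 < a)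
    (h₀ : ((0 : ℝ), (0 : ℝ)) ∈ S) (h₁ : (a, b) ∈ S)
    (hS : S ⊆ {z | 0 ≤ z.1 ∧ z.1 ≤ a ∧ b * z.1 ≤ a * z.2}) :
    {z ∈ convexHull ℝ S | ∀ w ∈ convexHull ℝ S, w.1 = z.1 → z.2 ≤ w.2} =
      segment ℝ (0, 0) (a, b) := by
  have hconvex : Convex ℝ {z : ℝ × ℝ | 0 ≤ z.1 ∧ z.1 ≤ a ∧ b * z.1 ≤ a * z.2} := by
    rintro x ⟨hx₀, hxa, hxb⟩ y ⟨hy₀, hya, hyb⟩ s t hs ht hst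
    simp only [Set.mem_ofPred_eq, Prod.fst_add, Prod.snd_add, Prod.smul_fst, Prod.smul_snd,
      smul_eq_mul]
    refine ⟨by positivity, by nlinarith, ?_⟩
    nlinarith [mul_le_mul_of_nonneg_left hxb hs, mul_le_mul_of_nonneg_left hyb ht]
  have hhull := convexHull_min hS hconvex
  have hseg : segment ℝ (0, 0) (a, b) ⊆ convexHull ℝ S :=
    segment_subset_convexHull h₀ h₁
  ext z
  constructor
  · rintro ⟨hz, hmin⟩
    obtain ⟨hz₀, hza, hzb⟩ := hhull hz
    have hw : (z.1, z.1 / a * b) ∈ segment ℝ (0, 0) (a, b) :=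
      Prod.mem_segment_zero_iff.mpr ⟨z.1 / a, ⟨by positivity, (div_le_one ha).mpr hza⟩,
        by rw [div_mul_cancel₀ _ ha.ne']⟩
    have hle : z.2 ≤ z.1 / a * b := hmin _ (hseg hw) rfl
    have hge : z.1 / a * b ≤ z.2 := by
      rw [div_mul_eq_mul_div, div_le_iff₀ ha]; linarith
    rwa [← Prod.mk.eta (p := z), le_antisymm hle hge]
  · intro hz
    refine ⟨hseg hz, fun w hw hwz => ?_⟩
    obtain ⟨t, -, rfl⟩ := Prod.mem_segment_zero_iff.mp hz
    obtain ⟨-, -, hwb⟩ := hhull hw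
    simp only at hwz ⊢
    rw [hwz] at hwb
    nlinarith

section

variable {K : Type*} [Field K] (v : Valuation K NNReal)

local notation "𝒪" => v.valuationSubring
local notation "π" => IsLocalRing.residue v.valuationSubring
local notation "ι" => algebraMap v.valuationSubring K

theorem Valuation.coeff_prod_X_sub_C_le {s : Multiset K} {r : NNReal} (hs : ∀ x ∈ s, v x ≤ r)
    (i : ℕ) : v ((s.map fun x => X - C x).prod.coeff i) ≤ r ^ (Multiset.card s - i) := by
  rcases le_or_gt i (Multiset.card s) with hi | hi
  · rw [Multiset.prod_X_sub_C_coeff s hi, v.map_mul, v.map_pow, v.map_neg, v.map_one, one_pow,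
      one_mul, Multiset.esymm]
    refine Multiset.sum_induction (fun y => v y ≤ _) _ (fun _ _ => v.map_add_le) (by simp) ?_
    intro x hx
    obtain ⟨t, ht, rfl⟩ := Multiset.mem_map.mp hx
    obtain ⟨hts, htcard⟩ := Multiset.mem_powersetCard.mp ht
    rw [map_multiset_prod, ← htcard, ← Multiset.card_map v]
    exact Multiset.prod_le_pow_card _ _ fun y hy => by
      obtain ⟨x, hx, rfl⟩ := Multiset.mem_map.mp hy
      exact hs x (Multiset.mem_of_le hts hx)
  · rw [coeff_eq_zero_of_natDegree_lt (by rwa [natDegree_multiset_prod_X_sub_C_eq_card]),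
      v.map_zero]
    positivity

theorem Valuation.coeff_pow_card_le_of_forall_le {a : K} {s : Multiset K} {r : NNReal}
    (hs : ∀ x ∈ s, v x ≤ r) (har : v a * r ^ Multiset.card s ≤ 1) (hs0 : s ≠ 0) (i : ℕ) :
    v ((C a * (s.map fun x => X - C x).prod).coeff i) ^ Multiset.card s ≤ v a ^ i := by
  set n := Multiset.card s
  rw [coeff_C_mul, v.map_mul]
  rcases le_or_gt i n with hi | hi
  · calc (v a * v ((s.map fun x => X - C x).prod.coeff i)) ^ n
        ≤ (v a * r ^ (n - i)) ^ n := by gcongr; exact v.coeff_prod_X_sub_C_le hs i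
      _ = v a ^ i * (v a * r ^ n) ^ (n - i) := by
        rw [mul_pow, mul_pow, ← pow_mul, ← pow_mul, ← mul_assoc, ← pow_add, mul_comm n]
        congr 2; omega
      _ ≤ v a ^ i := mul_le_of_le_one_right' (pow_le_one' har _)
  · rw [coeff_eq_zero_of_natDegree_lt (by rwa [natDegree_multiset_prod_X_sub_C_eq_card]),
      v.map_zero, mul_zero, zero_pow (Multiset.card_eq_zero.not.mpr hs0)]
    positivity

theorem Valuation.newtonPolygon_eq_segment_of_coeff_pow_le {f : K[X]} (hf : 0 < f.natDegree)
    (h₀ : v (f.coeff 0) = 1)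
    (hbound : ∀ i, v (f.coeff i) ^ f.natDegree ≤ v f.leadingCoeff ^ i) :
    newtonPolygon v f =
      segment ℝ (0, 0) ((f.natDegree : ℝ), -Real.log (v f.leadingCoeff : ℝ)) := by
  have hlc : f.leadingCoeff ≠ 0 := leadingCoeff_ne_zero.mpr (ne_zero_of_natDegree_gt hf)
  refine lowerBoundary_convexHull_eq_segment (by exact_mod_cast hf)
    ⟨0, fun h => by simp [h] at h₀, by simp [h₀]⟩ ⟨_, hlc, rfl⟩ ?_
  rintro _ ⟨i, hi, rfl⟩
  have hvi : (0 : ℝ) < v (f.coeff i) := NNReal.coe_pos.mpr (v.pos_iff.mpr hi)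
  have hlog : (f.natDegree : ℝ) * Real.log (v (f.coeff i)) ≤
      i * Real.log (v f.leadingCoeff) := by
    rw [← Real.log_pow, ← Real.log_pow]
    exact Real.log_le_log (pow_pos hvi _) (by exact_mod_cast hbound i)
  refine ⟨by positivity, ?_, by linarith⟩
  exact Nat.cast_le.mpr (le_natDegree_of_ne_zero hi)

theorem Valuation.charP_residueField {p : ℕ} (hp : p.Prime)
    (hvp : v (p : K) < 1) : CharP (IsLocalRing.ResidueField v.valuationSubring) p := by
  rw [CharP.charP_iff_prime_eq_zero hp, ← map_natCast (IsLocalRing.residue _),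
    IsLocalRing.residue_eq_zero_iff, Valuation.mem_maximalIdeal_iff]
  simpa using hvp

theorem Valuation.residue_eq_residue_iff {x y : 𝒪} : π x = π y ↔ v (ι x - ι y) < 1 := by
  rw [← sub_eq_zero, ← _root_.map_sub, IsLocalRing.residue_eq_zero_iff,
    Valuation.mem_maximalIdeal_iff]
  rfl

theorem Valuation.map_residue_eq_of_sub_eq_C {s t : Multiset 𝒪} {ε : K} (hε : v ε < 1)
    (h : ((s.map ι).map fun x => X - C x).prod - ((t.map ι).map fun x => X - C x).prod = C ε) :
    s.map π = t.map π := by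
  let ε₀ : 𝒪 := ⟨ε, hε.le⟩
  have hlift : (s.map fun x => X - C x).prod - (t.map fun x => X - C x).prod = C ε₀ := by
    apply map_injective ι Subtype.val_injective
    rwa [Polynomial.map_sub, map_multiset_prod_X_sub_C_s3, map_multiset_prod_X_sub_C_s3, map_C]
  have hε₀ : π ε₀ = 0 := by
    rw [IsLocalRing.residue_eq_zero_iff, Valuation.mem_maximalIdeal_iff]
    exact hε
  have hres := congrArg (Polynomial.map π) hlift
  rw [Polynomial.map_sub, map_multiset_prod_X_sub_C_s3, map_multiset_prod_X_sub_C_s3, map_C, hε₀,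
    C_0, sub_eq_zero] at hres
  simpa only [roots_multiset_prod_X_sub_C] using congrArg roots hres

theorem Valuation.derivative_map_residue {s d : Multiset 𝒪} {a : 𝒪}
    (h : derivative ((s.map ι).map fun x => X - C x).prod =
      C (ι a) * ((d.map ι).map fun x => X - C x).prod) :
    derivative ((s.map π).map fun x => X - C x).prod =
      C (π a) * ((d.map π).map fun x => X - C x).prod := by
  have hlift :
      derivative (s.map fun x => X - C x).prod = C a * (d.map fun x => X - C x).prod := by
    apply map_injective ι Subtype.val_injective
    rwa [← Polynomial.derivative_map, Polynomial.map_mul, map_multiset_prod_X_sub_C_s3,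
      map_multiset_prod_X_sub_C_s3, map_C]
  have hres := congrArg (Polynomial.map π) hlift
  rwa [← Polynomial.derivative_map, Polynomial.map_mul, map_multiset_prod_X_sub_C_s3,
    map_multiset_prod_X_sub_C_s3, map_C] at hres

theorem Valuation.sub_lt_one_of_derivative_prod_X_sub_C {p : ℕ} (hp : p.Prime)
    (hvp : v (p : K) < 1) {s t d : Multiset 𝒪} {ε : K} (hε : v ε < 1)
    (hst : ((s.map ι).map fun x => X - C x).prod - ((t.map ι).map fun x => X - C x).prod = C ε)
    (hder : derivative ((s.map ι).map fun x => X - C x).prod =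
      C (Multiset.card s : K) * ((d.map ι).map fun x => X - C x).prod)
    (hcard : Multiset.card d + 1 = Multiset.card s) (hsp : Multiset.card s < p)
    (hd : ∀ z ∈ d, z ∈ s + t) {x y : 𝒪} (hx : x ∈ s + t) (hy : y ∈ s + t) :
    v (ι x - ι y) < 1 := by
  classical
  have := v.charP_residueField hp hvp
  have hcast (m : ℕ) (hm₀ : 0 < m) (hmp : m < p) : (m : IsLocalRing.ResidueField 𝒪) ≠ 0 := by
    rw [Ne, CharP.cast_eq_zero_iff _ p]
    exact Nat.not_dvd_of_pos_of_lt hm₀ hmp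
  have hmap := v.map_residue_eq_of_sub_eq_C hε hst
  have hmem : ∀ z ∈ s + t, π z ∈ s.map π := fun z hz => by
    rcases Multiset.mem_add.mp hz with hz | hz
    · exact Multiset.mem_map_of_mem π hz
    · exact hmap ▸ Multiset.mem_map_of_mem π hz
  have hder' := v.derivative_map_residue (a := (Multiset.card s : 𝒪)) (by rwa [map_natCast])
  rw [map_natCast] at hder'
  rw [← v.residue_eq_residue_iff]
  refine Multiset.eq_of_mem_of_derivative_prod_X_sub_C (hcast _ (by omega) hsp) hder'
    (by simpa using hcard) ?_ ?_ (hmem x hx) (hmem y hy)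
  · intro z hz
    obtain ⟨w, hw, rfl⟩ := Multiset.mem_map.mp hz
    exact hmem w (hd w hw)
  · intro z hz
    refine hcast _ (Multiset.count_pos.mpr hz) (lt_of_le_of_lt ?_ hsp)
    simpa using Multiset.count_le_card z (s.map π)

theorem Valuation.sub_lt_one_of_derivative_dvd [CharZero K] [IsAlgClosed K] {p : ℕ}
    (hp : p.Prime) (hvp : v (p : K) < 1) {f g : K[X]} (hf : f.Monic) (hg : g.Monic) {ε : K}
    (hε : v ε < 1) (hfg : f - g = C ε) (hdvd : derivative f ∣ f * g)
    (hroots : ∀ x ∈ (f * g).roots, v x ≤ 1) (hdeg : f.natDegree < p) {x y : K}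
    (hx : x ∈ (f * g).roots) (hy : y ∈ (f * g).roots) : v (x - y) < 1 := by
  have hfg₀ : f * g ≠ 0 := (hf.mul hg).ne_zero
  have hf' : derivative f ≠ 0 := fun h => hfg₀ (zero_dvd_iff.mp (h ▸ hdvd))
  have hroots_fg : (f * g).roots = f.roots + g.roots := roots_mul hfg₀
  have hroots_f' : ∀ z ∈ (derivative f).roots, z ∈ (f * g).roots := fun z hz => by
    rw [mem_roots hfg₀]
    exact ((mem_roots hf').mp hz).dvd hdvd
  obtain ⟨s, hs⟩ : ∃ s : Multiset 𝒪, s.map ι = f.roots := CanLift.prf _ fun z hz =>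
    hroots z (hroots_fg ▸ Multiset.mem_add.mpr (Or.inl hz))
  obtain ⟨t, ht⟩ : ∃ t : Multiset 𝒪, t.map ι = g.roots := CanLift.prf _ fun z hz =>
    hroots z (hroots_fg ▸ Multiset.mem_add.mpr (Or.inr hz))
  obtain ⟨d, hd⟩ : ∃ d : Multiset 𝒪, d.map ι = (derivative f).roots :=
    CanLift.prf _ fun z hz => hroots z (hroots_f' z hz)
  have hst : (s + t).map ι = (f * g).roots := by rw [Multiset.map_add, hs, ht, hroots_fg]
  have hcard_s : Multiset.card s = f.natDegree := by
    rw [← Multiset.card_map ι, hs, IsAlgClosed.card_roots_eq_natDegree]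
  obtain ⟨x₀, hx₀, rfl⟩ := Multiset.mem_map.mp (hst ▸ hx)
  obtain ⟨y₀, hy₀, rfl⟩ := Multiset.mem_map.mp (hst ▸ hy)
  refine v.sub_lt_one_of_derivative_prod_X_sub_C (d := d) hp hvp hε ?_ ?_ ?_ (hcard_s ▸ hdeg) ?_
    hx₀ hy₀
  · rwa [hs, ht, prod_multiset_X_sub_C_of_monic_of_roots_card_eq hf
      IsAlgClosed.card_roots_eq_natDegree, prod_multiset_X_sub_C_of_monic_of_roots_card_eq hg
      IsAlgClosed.card_roots_eq_natDegree]
  · rw [hs, hd, prod_multiset_X_sub_C_of_monic_of_roots_card_eq hf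
      IsAlgClosed.card_roots_eq_natDegree, hcard_s]
    conv_lhs => rw [← C_leadingCoeff_mul_prod_multiset_X_sub_C
      (IsAlgClosed.card_roots_eq_natDegree (p := derivative f))]
    rw [leadingCoeff_derivative, hf.leadingCoeff, one_mul]
  · rw [← Multiset.card_map ι, hd, hcard_s, IsAlgClosed.card_roots_eq_natDegree,
      natDegree_derivative]
    have := derivative_ne_zero.mp hf'
    omega
  · intro z hz
    have := hroots_f' _ (hd ▸ Multiset.mem_map_of_mem ι hz)
    rw [← hst] at this
    exact (Multiset.mem_map_of_injective Subtype.val_injective).mp this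

theorem Valuation.leadingCoeff_mul_pow_natDegree_le_one [CharZero K] [IsAlgClosed K] {p : ℕ}
    (hp : p.Prime) (hvp : v (p : K) < 1) {B : K[X]} (hdvd : derivative B ∣ B * (B - 1))
    (hn : 0 < B.natDegree) (hnp : B.natDegree < p) (h0 : B.IsRoot 0) {c : K}
    (hc : c ∈ (B * (B - 1)).roots) (hmax : ∀ γ ∈ (B * (B - 1)).roots, v γ ≤ v c) :
    v B.leadingCoeff * v c ^ B.natDegree ≤ 1 := by
  by_contra! hlt
  set n := B.natDegree
  set w := B.leadingCoeff * c ^ n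
  have hw : 1 < v w := by rwa [v.map_mul, v.map_pow]
  have hw₀ : w ≠ 0 := v.ne_zero_iff.mp (zero_lt_one.trans hw).ne'
  have hc₀ : c ≠ 0 := fun h => by simp [w, h, hn.ne'] at hw₀
  have hP₀ : B * (B - 1) ≠ 0 := fun h => by simp [h] at hc
  set f := C w⁻¹ * B.comp (C c * X)
  set g := C w⁻¹ * (B - 1).comp (C c * X)
  have hf : f.Monic := monic_C_inv_mul_comp_C_mul_X (ne_zero_of_natDegree_gt hn) hc₀
  have hg : g.Monic := by
    have := monic_C_inv_mul_comp_C_mul_X (P := B - 1) (fun h => by simp [h] at hP₀) hc₀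
    rwa [natDegree_sub_one, leadingCoeff_sub_one hn] at this
  have hfg : f - g = C w⁻¹ := by
    rw [← mul_sub, ← sub_comp, sub_sub_cancel, one_comp, mul_one]
  have hfg₀ : f * g ≠ 0 := (hf.mul hg).ne_zero
  have hmem (x : K) : x ∈ (f * g).roots ↔ c * x ∈ (B * (B - 1)).roots := by
    rw [mem_roots hfg₀, mem_roots hP₀, IsRoot, IsRoot]
    simp [f, g, eval_comp, hw₀]
  have hdvd' : derivative f ∣ f * g :=
    (derivative_C_mul_comp_C_mul_X_dvd hdvd (inv_ne_zero hw₀) hc₀).trans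
      (Dvd.intro_left (C w⁻¹ * C w⁻¹) (by simp only [f, g, mul_comp]; ring))
  have hε : v w⁻¹ < 1 := by rwa [map_inv₀, inv_lt_one₀ (zero_lt_one.trans hw)]
  have key := v.sub_lt_one_of_derivative_dvd hp hvp hf hg hε hfg
    hdvd' (fun x hx => ?_) ?_ ((hmem 0).mpr ?_) ((hmem 1).mpr (by rwa [mul_one]))
  · simp at key
  · have := hmax _ ((hmem x).mp hx)
    rw [v.map_mul] at this
    exact le_of_mul_le_mul_left (by simpa using this) (v.pos_iff.mpr hc₀)
  · rw [natDegree_C_mul (inv_ne_zero hw₀), natDegree_comp, natDegree_C_mul_X _ hc₀, mul_one]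
    exact hnp
  · rw [mul_zero, mem_roots hP₀, IsRoot, eval_mul, h0.eq_zero, zero_mul]

theorem Valuation.coeff_sub_one_pow_le [CharZero K] [IsAlgClosed K] {p : ℕ} (hp : p.Prime)
    (hvp : v (p : K) < 1) {B : K[X]} (hdvd : derivative B ∣ B * (B - 1))
    (hn : 0 < B.natDegree) (hnp : B.natDegree < p) (h0 : B.IsRoot 0) (i : ℕ) :
    v ((B - 1).coeff i) ^ B.natDegree ≤ v B.leadingCoeff ^ i := by
  have hP₀ : B * (B - 1) ≠ 0 := mul_ne_zero (ne_zero_of_natDegree_gt hn)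
    (ne_zero_of_natDegree_gt ((natDegree_sub_one B).symm ▸ hn))
  have h0mem : (0 : K) ∈ (B * (B - 1)).roots := by
    rw [mem_roots hP₀, IsRoot, eval_mul, h0.eq_zero, zero_mul]
  obtain ⟨c, hc, hmax⟩ := Multiset.exists_max_image v (s := (B * (B - 1)).roots)
    fun h => by simp [h] at h0mem
  have hcard : Multiset.card (B - 1).roots = B.natDegree := by
    rw [IsAlgClosed.card_roots_eq_natDegree, natDegree_sub_one]
  have hsub : ∀ β ∈ (B - 1).roots, v β ≤ v c := fun β hβ =>
    hmax β (by rw [roots_mul hP₀]; exact Multiset.mem_add.mpr (Or.inr hβ))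
  rw [← C_leadingCoeff_mul_prod_multiset_X_sub_C
    (IsAlgClosed.card_roots_eq_natDegree (p := B - 1)), leadingCoeff_sub_one hn,
    ← hcard]
  refine v.coeff_pow_card_le_of_forall_le hsub ?_ ?_ i
  · rw [hcard]
    exact v.leadingCoeff_mul_pow_natDegree_le_one hp hvp hdvd hn hnp h0 hc hmax
  · rw [← Multiset.card_pos, hcard]
    exact hn

end

theorem newtonPolygon_belyi_sub_one_eq_segment_general {K : Type*} [Field K] [IsAlgClosed K] [CharZero K]
    (p : ℕ) (hp : p.Prime) (v : Valuation K NNReal)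
    (hvp1 : v (p : K) < 1)
    (B : K[X]) (hB : IsBelyi B) (n : ℕ) (hn : B.natDegree = n)
    (hn1 : 1 ≤ n) (hnp : n < p) (h0 : B.eval 0 = 0) :
    newtonPolygon v (B - 1) =
      segment ℝ ((0 : ℝ), (0 : ℝ)) ((n : ℝ), -Real.log (v B.leadingCoeff : ℝ)) ∧
    ∀ i : ℕ, v ((B - 1).coeff i) ^ n ≤ v B.leadingCoeff ^ i := by
  subst hn
  have hbound := v.coeff_sub_one_pow_le hp hvp1 hB.2.2 hn1 hnp h0
  refine ⟨?_, hbound⟩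
  have hpoly := v.newtonPolygon_eq_segment_of_coeff_pow_le (f := B - 1)
    (by rwa [natDegree_sub_one]) (by simp [coeff_zero_eq_eval_zero, h0])
    (by rwa [natDegree_sub_one, leadingCoeff_sub_one hn1])
  rwa [natDegree_sub_one, leadingCoeff_sub_one hn1] at hpoly

/-- If `B` is a Belyi polynomial with `1 ≤ deg B = n < p` and `B 0 = 0`, with leading
coefficient `aₙ`, then the Newton polygon of `B - 1` is the single line segment from
`(0, 0)` to `(n, -log v aₙ)`; equivalently every coefficient `bᵢ` of `B - 1` satisfies
`v bᵢ ^ n ≤ v aₙ ^ i`. -/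
theorem newtonPolygon_belyi_sub_one_eq_segment {K : Type*} [Field K] [IsAlgClosed K] [CharZero K]
    (p : ℕ) (hp : p.Prime) (v : Valuation K NNReal)
    (hvp0 : 0 < v (p : K)) (hvp1 : v (p : K) < 1)
    (B : K[X]) (hB : IsBelyi B) (n : ℕ) (hn : B.natDegree = n)
    (hn1 : 1 ≤ n) (hnp : n < p) (h0 : B.eval 0 = 0) :
    newtonPolygon v (B - 1) =
      segment ℝ ((0 : ℝ), (0 : ℝ)) ((n : ℝ), -Real.log (v B.leadingCoeff : ℝ)) ∧
    ∀ i : ℕ, v ((B - 1).coeff i) ^ n ≤ v B.leadingCoeff ^ i :=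
  newtonPolygon_belyi_sub_one_eq_segment_general p hp v hvp1 B hB n hn hn1 hnp h0
end

section
/- Let F be an algebraically closed field of characteristic zero and let f ∈ F[X] be a nonzero polynomial. If the derivative f' divides f² and f(0) = 0, then f is a monomial: f = a·X^d for some a ∈ F and d ∈ ℕ. -/
/-!
When `f` splits, every root of `f'` is a root of `f ^ n`, hence of `f`, and a root of `f`
of multiplicity `m` is a root of `f'` of multiplicity `m - 1` (characteristic zero). Summing
multiplicities, `deg f' = deg f - k` where `k` is the number of distinct roots of `f`; since also
`deg f' = deg f - 1`, `f` has at most one distinct root, and `f 0 = 0` forces it to be `0`.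
-/

open Polynomial

namespace Polynomial

variable {R : Type*} [CommRing R] [IsDomain R] {f : R[X]}

theorem roots_derivative_subset_of_dvd_pow {n : ℕ} (h : derivative f ∣ f ^ n) :
    (derivative f).roots ⊆ f.roots := by
  intro r hr
  obtain ⟨hf', hroot⟩ := mem_roots'.1 hr
  have hf : f ≠ 0 := by rintro rfl; simp at hf'
  have : (f ^ n).IsRoot r := by simpa [hroot.eq_zero] using eval_dvd (x := r) h
  exact (mem_roots hf).2 (by simpa using this : eval r f = 0 ∧ n ≠ 0).1

theorem card_roots_derivative_add_card_toFinset [CharZero R] [DecidableEq R]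
    (h : (derivative f).roots ⊆ f.roots) :
    Multiset.card (derivative f).roots + f.roots.toFinset.card = Multiset.card f.roots := by
  calc Multiset.card (derivative f).roots + f.roots.toFinset.card
      = ∑ r ∈ f.roots.toFinset, ((derivative f).roots.count r + 1) := by
        rw [Finset.sum_add_distrib, Finset.card_eq_sum_ones,
          Multiset.sum_count_eq_card fun r hr => Multiset.mem_toFinset.2 (h hr)]
    _ = ∑ r ∈ f.roots.toFinset, f.roots.count r := by
        refine Finset.sum_congr rfl fun r hr => ?_
        have hr := Multiset.mem_toFinset.1 hr
        rw [count_roots, count_roots, derivative_rootMultiplicity_of_root (isRoot_of_mem_roots hr),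
          Nat.sub_add_cancel (rootMultiplicity_pos'.2 (mem_roots'.1 hr))]
    _ = Multiset.card f.roots := Multiset.toFinset_sum_count_eq _

theorem Splits.card_roots_toFinset_le_one_of_derivative_dvd_pow [CharZero R] [DecidableEq R]
    {n : ℕ} (hsplit : f.Splits) (h : derivative f ∣ f ^ n) : f.roots.toFinset.card ≤ 1 := by
  rcases eq_or_ne f 0 with rfl | hf
  · simp
  have hcard := card_roots_derivative_add_card_toFinset (roots_derivative_subset_of_dvd_pow h)
  have hsplit' : (derivative f).Splits := (hsplit.pow n).of_dvd (pow_ne_zero n hf) h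
  rw [← hsplit.natDegree_eq_card_roots, ← hsplit'.natDegree_eq_card_roots,
    natDegree_derivative] at hcard
  omega

theorem Splits.eq_C_leadingCoeff_mul_X_sub_C_pow (hsplit : f.Splits) {a : R}
    (h : ∀ r ∈ f.roots, r = a) : f = C f.leadingCoeff * (X - C a) ^ f.natDegree := by
  conv_lhs => rw [hsplit.eq_prod_roots, Multiset.eq_replicate_card.2 h]
  simp [hsplit.natDegree_eq_card_roots]

end Polynomial

/-- Over an algebraically closed field of characteristic zero, a nonzero polynomial `f`
with `f' ∣ f ^ 2` and `f 0 = 0` is a monomial. -/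
theorem monomial_of_derivative_dvd_sq {F : Type*} [Field F] [IsAlgClosed F] [CharZero F]
    (f : F[X]) (hf : f ≠ 0) (hdvd : f.derivative ∣ f ^ 2) (h0 : f.eval 0 = 0) :
    ∃ (a : F) (d : ℕ), f = C a * X ^ d := by
  classical
  have hsplit := IsAlgClosed.splits f
  have hzero : (0 : F) ∈ f.roots.toFinset := Multiset.mem_toFinset.2 ((mem_roots hf).2 h0)
  have hroots : ∀ r ∈ f.roots, r = 0 := fun r hr =>
    Finset.card_le_one.1 (hsplit.card_roots_toFinset_le_one_of_derivative_dvd_pow hdvd) r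
      (Multiset.mem_toFinset.2 hr) 0 hzero
  refine ⟨f.leadingCoeff, f.natDegree, ?_⟩
  simpa using hsplit.eq_C_leadingCoeff_mul_X_sub_C_pow hroots
end

section
/- For natural numbers a, b with 0 < a < b, the polynomial B_{a,b}(X) = b^b · a^{−a} · (b−a)^{−(b−a)} · X^a · (1−X)^{b−a} ∈ ℚ[X] is a Belyi polynomial, and B_{a,b}(a/b) = 1 (so B_{a,b} maps each of a/b, 0, 1 into {0,1}). -/
open Polynomial

/-- For `0 < a < b`, the polynomial
`B_{a,b} = b^b · a^{-a} · (b-a)^{-(b-a)} · X^a · (1 - X)^(b-a)` is a Belyi polynomial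
and maps `a/b` to `1`. -/
theorem basic_belyi (a b : ℕ) (ha : 0 < a) (hab : a < b) :
    IsBelyi (C ((b : ℚ) ^ b / ((a : ℚ) ^ a * ((b - a : ℕ) : ℚ) ^ (b - a))) *
        X ^ a * (1 - X) ^ (b - a)) ∧
    (C ((b : ℚ) ^ b / ((a : ℚ) ^ a * ((b - a : ℕ) : ℚ) ^ (b - a))) *
        X ^ a * (1 - X) ^ (b - a)).eval ((a : ℚ) / (b : ℚ)) = 1 := by
  have hb0 : (0:ℕ) < b := lt_trans ha hab
  have ha0 : ((a:ℚ)) ≠ 0 := Nat.cast_ne_zero.2 ha.ne'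
  have hb0' : ((b:ℚ)) ≠ 0 := Nat.cast_ne_zero.2 hb0.ne'
  have hn0 : (((b-a:ℕ)):ℚ) ≠ 0 := Nat.cast_ne_zero.2 (Nat.sub_pos_of_lt hab).ne'
  have hsum : a + (b - a) = b := Nat.add_sub_cancel' hab.le
  set c : ℚ := (b : ℚ) ^ b / ((a : ℚ) ^ a * ((b - a : ℕ) : ℚ) ^ (b - a)) with hc
  set B : ℚ[X] := C c * X ^ a * (1 - X) ^ (b - a) with hB
  have heval : B.eval ((a:ℚ)/b) = 1 := by
    have h1 : (1 : ℚ) - (a:ℚ)/b = ((b-a:ℕ):ℚ)/b := by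
      rw [Nat.cast_sub hab.le]; field_simp
    rw [hB]
    simp only [eval_mul, eval_C, eval_pow, eval_sub, eval_one, eval_X, h1]
    rw [div_pow, div_pow, div_mul_div_comm, div_mul_div_comm]
    have key : ((b:ℚ))^a * (b:ℚ)^(b-a) = (b:ℚ)^b := by rw [← pow_add, hsum]
    rw [div_eq_one_iff_eq (by positivity)]
    linear_combination (-(a:ℚ)^a*((b-a:ℕ):ℚ)^(b-a)) * key
  refine ⟨⟨?_, ?_, ?_⟩, heval⟩
  · rw [hB]; simp [zero_pow ha.ne']
  · rw [hB]; simp [zero_pow (Nat.sub_pos_of_lt hab).ne']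
  · obtain ⟨m, hm⟩ : ∃ m, a = m + 1 := ⟨a - 1, (Nat.succ_pred_eq_of_pos ha).symm⟩
    obtain ⟨k, hk⟩ : ∃ k, b - a = k + 1 :=
      ⟨b - a - 1, (Nat.succ_pred_eq_of_pos (Nat.sub_pos_of_lt hab)).symm⟩
    have hbq : (b:ℚ) = (m:ℚ) + (k:ℚ) + 2 := by
      have hbn : b = (m + 1) + (k + 1) := by omega
      rw [hbn]; push_cast; ring
    have hder : derivative B = (C c * (X^m * (1 - X)^k)) * (C ((m:ℚ)+1) - C (b:ℚ) * X) := by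
      rw [hB, hk, hm, hbq]
      simp only [derivative_mul, derivative_C, derivative_pow, derivative_X, derivative_one,
        derivative_sub, zero_sub, Nat.add_sub_cancel, Nat.cast_add, Nat.cast_one, C_add, C_1,
        mul_one, zero_mul, zero_add, mul_neg, mul_zero]
      push_cast [C_add, C_1, map_ofNat]
      ring
    have h1 : (C c * (X^m * (1 - X)^k)) ∣ B := ⟨X * (1 - X), by rw [hB, hk, hm]; ring⟩
    have hroot : (B - 1).eval ((a:ℚ)/b) = 0 := by rw [eval_sub, heval, eval_one, sub_self]
    obtain ⟨q, hq⟩ := (dvd_iff_isRoot).2 hroot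
    have h2 : (C ((m:ℚ)+1) - C (b:ℚ) * X) ∣ (B - 1) := by
      refine ⟨C (-(b:ℚ)⁻¹) * q, ?_⟩
      have key : C (-(b:ℚ)⁻¹) * C ((b:ℚ)) = -1 := by
        rw [← C_mul, show (-(b:ℚ)⁻¹ * b) = -1 by field_simp, map_neg, C_1]
      have hma : C ((m:ℚ)+1) = C (b:ℚ) * C ((a:ℚ)/b) := by
        rw [← C_mul]; congr 1; rw [hm]; push_cast; field_simp
      rw [hq, hma]
      linear_combination (X - C ((a:ℚ)/b)) * q * key
    rw [hder]
    exact mul_dvd_mul h1 h2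
end

section
/- Let F be a field of characteristic zero. If B₁ and B₂ are Belyi polynomials over F, then their composition B₁ ∘ B₂ (i.e. B₁.comp B₂) is a Belyi polynomial over F. -/
open Polynomial

/-- If `B` is a nonconstant Belyi polynomial over a char-zero field and `B * (B-1) = B' * Q`,
then `Q` has `t` as a root whenever `B.eval t ∈ {0,1}`. -/
lemma belyi_quot_root {F : Type*} [Field F] [CharZero F] {B Q : F[X]}
    (hd : B.derivative ≠ 0) (hQ : B * (B - 1) = B.derivative * Q)
    {t : F} (ht : B.eval t ∈ ({0, 1} : Set F)) : Q.IsRoot t := by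
  set c : F := B.eval t with hc
  have hp : (B - C c).IsRoot t := by simp [hc]
  have hpne : B - C c ≠ 0 := by
    intro h
    apply hd
    have : B = C c := by linear_combination (norm := ring_nf) h
    rw [this]; simp
  have hder : derivative (B - C c) = derivative B := by simp
  -- root multiplicity of B' at t
  have hmder : (derivative B).rootMultiplicity t = (B - C c).rootMultiplicity t - 1 := by
    rw [← hder, derivative_rootMultiplicity_of_root hp]
  have hmpos : 0 < (B - C c).rootMultiplicity t := (rootMultiplicity_pos hpne).2 hp
  -- root multiplicity of B * (B - 1) at t equals that of B - C c
  have hB0 : B ≠ 0 := fun h => hd (by rw [h]; simp)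
  have hB1 : B - 1 ≠ 0 := fun h => hd (by rw [sub_eq_zero.mp h]; simp)
  have hLHSne : B * (B - 1) ≠ 0 := mul_ne_zero hB0 hB1
  have hmLHS : (B * (B - 1)).rootMultiplicity t = (B - C c).rootMultiplicity t := by
    rcases ht with h0 | h0
    · -- c = 0
      have hc0 : c = 0 := h0
      have h1 : (B - 1).rootMultiplicity t = 0 :=
        rootMultiplicity_eq_zero (by simp [IsRoot, ← hc, hc0])
      rw [rootMultiplicity_mul hLHSne, h1, add_zero, hc0, map_zero, sub_zero]
    · -- c = 1
      have hc1 : c = 1 := h0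
      have h1 : B.rootMultiplicity t = 0 :=
        rootMultiplicity_eq_zero (by simp [IsRoot, ← hc, hc1])
      rw [rootMultiplicity_mul hLHSne, h1, zero_add]
      congr 1
      rw [hc1]
      norm_num
  have hQne : Q ≠ 0 := by
    intro h; apply hLHSne; rw [hQ, h, mul_zero]
  have hmQ : 0 < Q.rootMultiplicity t := by
    have := rootMultiplicity_mul (x := t) (hQ ▸ hLHSne)
    rw [← hQ, hmLHS, hmder] at this
    omega
  exact (rootMultiplicity_pos hQne).mp hmQ

/-- Over a field of characteristic zero, the composition of two Belyi polynomials is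
again a Belyi polynomial. -/
theorem isBelyi_comp {F : Type*} [Field F] [CharZero F] (B₁ B₂ : F[X])
    (h₁ : IsBelyi B₁) (h₂ : IsBelyi B₂) : IsBelyi (B₁.comp B₂) := by
  obtain ⟨h₁0, h₁1, hQ₁⟩ := h₁
  obtain ⟨h₂0, h₂1, hQ₂⟩ := h₂
  have heval : ∀ t : F, B₂.eval t ∈ ({0, 1} : Set F) →
      (B₁.comp B₂).eval t ∈ ({0, 1} : Set F) := by
    intro t ht
    rw [eval_comp]
    rcases ht with h | h <;> rw [h]
    · exact h₁0
    · exact h₁1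
  refine ⟨heval 0 h₂0, heval 1 h₂1, ?_⟩
  -- degenerate cases
  by_cases hd₁ : B₁.derivative = 0
  · -- B₁ * (B₁ - 1) = 0
    rw [hd₁, zero_dvd_iff] at hQ₁
    have : B₁.comp B₂ * (B₁.comp B₂ - 1) = 0 := by
      have : (B₁ * (B₁ - 1)).comp B₂ = 0 := by rw [hQ₁, zero_comp]
      rw [← this]; simp [mul_comp, sub_comp]
    rw [this]
    exact dvd_zero _
  by_cases hd₂ : B₂.derivative = 0
  · -- B₂ constant
    obtain hB₂ := eq_C_of_derivative_eq_zero hd₂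
    have hc : B₂.coeff 0 ∈ ({0, 1} : Set F) := by
      have := h₂0; rwa [hB₂, eval_C] at this
    have : B₁.comp B₂ * (B₁.comp B₂ - 1) = 0 := by
      rw [hB₂, comp_C]
      rcases hc with h | h <;> rw [h]
      · rcases h₁0 with h' | h' <;> rw [h'] <;> ring_nf <;> simp
      · rcases h₁1 with h' | h' <;> rw [h'] <;> ring_nf <;> simp
    rw [this]
    exact dvd_zero _
  -- main case
  obtain ⟨Q, hQ⟩ := hQ₁
  have hr0 : Q.IsRoot 0 := belyi_quot_root hd₁ hQ h₁0
  have hr1 : Q.IsRoot 1 := belyi_quot_root hd₁ hQ h₁1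
  have hdvd : (X - C 0) * (X - C 1) ∣ Q := by
    refine (isCoprime_X_sub_C_of_isUnit_sub ?_).mul_dvd
      (dvd_iff_isRoot.2 hr0) (dvd_iff_isRoot.2 hr1)
    simp
  obtain ⟨R, hR⟩ := hdvd
  obtain ⟨S, hS⟩ := hQ₂
  rw [derivative_comp]
  have key : B₁.comp B₂ * (B₁.comp B₂ - 1) =
      B₁.derivative.comp B₂ * B₂.derivative * (S * R.comp B₂) := by
    have : B₁.comp B₂ * (B₁.comp B₂ - 1) = (B₁ * (B₁ - 1)).comp B₂ := by
      simp [mul_comp, sub_comp]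
    rw [this, hQ, hR, mul_comp, mul_comp, mul_comp, sub_comp, sub_comp, X_comp, C_comp, C_comp]
    rw [map_zero, sub_zero, map_one]
    calc B₁.derivative.comp B₂ * (B₂ * (B₂ - 1) * R.comp B₂)
        = B₁.derivative.comp B₂ * (B₂.derivative * S * R.comp B₂) := by rw [hS]
      _ = B₁.derivative.comp B₂ * B₂.derivative * (S * R.comp B₂) := by ring
  exact ⟨S * R.comp B₂, by rw [key]; ring⟩
end

section
/- For every integer n ≥ 1, the polynomial B(X) = (Tₙ(2X−1) + 1)/2 ∈ ℚ[X], where Tₙ is the n-th Chebyshev polynomial of the first kind (T₀ = 1, T₁ = X, Tₙ₊₁ = 2X·Tₙ − Tₙ₋₁), is a Belyi polynomial. -/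
open Polynomial

namespace Polynomial.Chebyshev

variable (R : Type*) [CommRing R]

theorem T_sq_sub_X_sq_sub_one_mul_U_sq_natCast (n : ℕ) :
    T R n ^ 2 - (X ^ 2 - 1) * U R (n - 1) ^ 2 = 1 := by
  induction n with
  | zero => simp
  | succ n ih =>
    -- `(Tₙ₊₁, Uₙ) = (X Tₙ + (X² - 1) Uₙ₋₁, Tₙ + X Uₙ₋₁)`, a substitution of determinant `1`
    -- that preserves the form `T² - (X² - 1) U²`.
    have hT := T_eq_X_mul_T_sub_pol_U R ((n : ℤ) - 1)
    have hU := U_eq_X_mul_U_add_T R ((n : ℤ) - 1)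
    simp only [sub_add_cancel, show (n : ℤ) - 1 + 2 = n + 1 by ring] at hT hU
    push_cast
    rw [add_sub_cancel_right, hT, hU]
    linear_combination ih

theorem T_sq_sub_X_sq_sub_one_mul_U_sq (n : ℤ) :
    T R n ^ 2 - (X ^ 2 - 1) * U R (n - 1) ^ 2 = 1 := by
  obtain ⟨k, rfl | rfl⟩ := Int.eq_nat_or_neg n
  · exact T_sq_sub_X_sq_sub_one_mul_U_sq_natCast R k
  · rw [T_neg, U_neg_sub_one, neg_sq]
    exact T_sq_sub_X_sq_sub_one_mul_U_sq_natCast R k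

end Polynomial.Chebyshev

section

variable (F : Type*) [Field F]

noncomputable def chebyshevBelyi (n : ℤ) : F[X] :=
  C (1 / 2 : F) * ((Chebyshev.T F n).comp (2 * X - 1) + 1)

variable {F}

theorem chebyshevBelyi_eval (n : ℤ) (x : F) :
    (chebyshevBelyi F n).eval x = 1 / 2 * ((Chebyshev.T F n).eval (2 * x - 1) + 1) := by
  simp [chebyshevBelyi, eval_comp]

variable [NeZero (2 : F)]

theorem C_half_mul_two : C (1 / 2 : F) * 2 = 1 := by
  rw [← C_ofNat, ← C_mul, one_div_mul_cancel two_ne_zero, C_1]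

theorem chebyshevBelyi_eval_one (n : ℤ) : (chebyshevBelyi F n).eval 1 = 1 := by
  rw [chebyshevBelyi_eval, mul_one, show (2 : F) - 1 = 1 by norm_num, Chebyshev.T_eval_one,
    one_add_one_eq_two, one_div_mul_cancel two_ne_zero]

theorem chebyshevBelyi_eval_zero_mem (n : ℤ) :
    (chebyshevBelyi F n).eval 0 ∈ ({0, 1} : Set F) := by
  rw [chebyshevBelyi_eval, mul_zero, zero_sub, Chebyshev.T_eval_neg_one]
  rcases Int.even_or_odd n with h | h
  · simp [Int.negOnePow_even n h, one_add_one_eq_two, two_ne_zero (α := F)]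
  · simp [Int.negOnePow_odd n h]

theorem derivative_chebyshevBelyi (n : ℤ) :
    derivative (chebyshevBelyi F n) = n * (Chebyshev.U F (n - 1)).comp (2 * X - 1) := by
  simp only [chebyshevBelyi, derivative_add, derivative_one, derivative_comp,
    Chebyshev.T_derivative_eq_U, mul_comp, intCast_comp, derivative_sub, derivative_mul,
    derivative_X, derivative_C, derivative_ofNat]
  linear_combination (n * (Chebyshev.U F (n - 1)).comp (2 * X - 1)) * C_half_mul_two (F := F)

theorem chebyshevBelyi_mul_sub_one (n : ℤ) :
    chebyshevBelyi F n * (chebyshevBelyi F n - 1) =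
      (X ^ 2 - X) * (Chebyshev.U F (n - 1)).comp (2 * X - 1) ^ 2 := by
  have pell := congrArg (·.comp (2 * X - 1 : F[X]))
    (Chebyshev.T_sq_sub_X_sq_sub_one_mul_U_sq F n)
  simp only [sub_comp, mul_comp, pow_comp, one_comp, X_comp] at pell
  rw [chebyshevBelyi]
  set A := (Chebyshev.T F n).comp (2 * X - 1)
  set V := (Chebyshev.U F (n - 1)).comp (2 * X - 1)
  set c := C (1 / 2 : F)
  linear_combination c ^ 2 * pell +
    (c * (A + 1) + (2 * c + 1) * (X ^ 2 - X) * V ^ 2) * C_half_mul_two (F := F)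

theorem isBelyi_chebyshevBelyi {n : ℤ} (hn : (n : F) ≠ 0) : IsBelyi (chebyshevBelyi F n) := by
  refine ⟨chebyshevBelyi_eval_zero_mem n, Or.inr (chebyshevBelyi_eval_one n), ?_⟩
  rw [derivative_chebyshevBelyi, chebyshevBelyi_mul_sub_one, ← C_eq_intCast,
    (isUnit_C.mpr hn.isUnit).mul_left_dvd]
  exact dvd_mul_of_dvd_right (dvd_pow_self _ two_ne_zero) _

end

/-- For every `n ≥ 1`, the polynomial `(Tₙ(2X - 1) + 1) / 2`, where `Tₙ` is the `n`-th
Chebyshev polynomial of the first kind, is a Belyi polynomial. -/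
theorem chebyshev_belyi (n : ℕ) (hn : 1 ≤ n) :
    IsBelyi (C (1 / 2 : ℚ) * ((Chebyshev.T ℚ (n : ℤ)).comp (2 * X - 1) + 1)) :=
  isBelyi_chebyshevBelyi (n := n) (by exact_mod_cast Nat.one_le_iff_ne_zero.mp hn)
end

section
/- Let F be a field of characteristic zero. Every Belyi polynomial B ∈ F[X] of degree exactly 2 satisfies B(4) ∉ {0,1}. (Hence the Belyi height of 4 is not 2, and combined with the other results ℋ(4) = 3.) -/
/-!
If `B` is quadratic with vertex `v` and `B' ∣ B (B - 1)`, then `X - v` divides `B (B - 1)`, so the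
critical value `B v` lies in `{0, 1}`. Every other point of `B⁻¹ {0, 1}` then takes the other value,
and a parabola takes equal values only at points symmetric about its vertex. Hence any three points
of `B⁻¹ {0, 1}` form an arithmetic progression, which `0, 1, 4` do not.
-/

open Polynomial

namespace Polynomial

variable {F : Type*} [Field F]

theorem eq_quadratic_of_natDegree_le_two {B : F[X]} (h : B.natDegree ≤ 2) :
    B = C (B.coeff 2) * X ^ 2 + C (B.coeff 1) * X + C (B.coeff 0) := by
  conv_lhs => rw [B.as_sum_range' 3 (by omega)]
  simp only [← C_mul_X_pow_eq_monomial, Finset.sum_range_succ, Finset.range_one,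
    Finset.sum_singleton, pow_zero, mul_one, pow_one]
  ring

theorem coeff_two_ne_zero_of_natDegree_eq_two {B : F[X]} (hB : B.natDegree = 2) :
    B.coeff 2 ≠ 0 := by
  rw [← hB]
  exact leadingCoeff_ne_zero.mpr (ne_zero_of_natDegree_gt (n := 0) (by omega))

def quadraticVertex (B : F[X]) : F := -B.coeff 1 / (2 * B.coeff 2)

section Quadratic

variable [NeZero (2 : F)] {B : F[X]}

theorem derivative_eq_of_natDegree_eq_two (hB : B.natDegree = 2) :
    derivative B = C (2 * B.coeff 2) * (X - C B.quadraticVertex) := by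
  have ha := coeff_two_ne_zero_of_natDegree_eq_two hB
  have hvertex : 2 * B.coeff 2 * B.quadraticVertex = -B.coeff 1 := by
    rw [quadraticVertex]
    field_simp
  conv_lhs => rw [eq_quadratic_of_natDegree_le_two hB.le]
  rw [mul_sub, ← C_mul, hvertex]
  simp only [derivative_add, derivative_mul, derivative_C, derivative_X_pow, derivative_X,
    map_mul, map_neg, Nat.cast_ofNat]
  ring

theorem eval_eq_vertex_form (hB : B.natDegree = 2) (x : F) :
    B.eval x = B.coeff 2 * (x - B.quadraticVertex) ^ 2 + B.eval B.quadraticVertex := by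
  have ha := coeff_two_ne_zero_of_natDegree_eq_two hB
  have eval_eq (y : F) : B.eval y = B.coeff 2 * y ^ 2 + B.coeff 1 * y + B.coeff 0 := by
    conv_lhs => rw [eq_quadratic_of_natDegree_le_two hB.le]
    simp
  rw [eval_eq, eval_eq, quadraticVertex]
  field_simp
  ring

theorem add_eq_two_mul_quadraticVertex_of_eval_eq (hB : B.natDegree = 2) {x y : F}
    (hxy : x ≠ y) (h : B.eval x = B.eval y) : x + y = 2 * B.quadraticVertex := by
  rw [eval_eq_vertex_form hB x, eval_eq_vertex_form hB y, add_left_inj,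
    mul_right_inj' (coeff_two_ne_zero_of_natDegree_eq_two hB), sq_eq_sq_iff_eq_or_eq_neg] at h
  rcases h with h | h
  · exact absurd (sub_left_inj.mp h) hxy
  · linear_combination h

theorem eval_quadraticVertex_mem_of_derivative_dvd (hB : B.natDegree = 2)
    (hdvd : derivative B ∣ B * (B - 1)) : B.eval B.quadraticVertex ∈ ({0, 1} : Set F) := by
  have hroot : X - C B.quadraticVertex ∣ B * (B - 1) :=
    (dvd_mul_left _ _).trans (derivative_eq_of_natDegree_eq_two hB ▸ hdvd)
  rw [dvd_iff_isRoot, IsRoot, eval_mul, eval_sub, eval_one, mul_eq_zero, sub_eq_zero] at hroot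
  exact hroot

theorem eval_eq_one_sub_eval_quadraticVertex (hB : B.natDegree = 2)
    (hdvd : derivative B ∣ B * (B - 1)) {x : F} (hx : B.eval x ∈ ({0, 1} : Set F))
    (hxv : x ≠ B.quadraticVertex) : B.eval x = 1 - B.eval B.quadraticVertex := by
  have hne : B.eval x ≠ B.eval B.quadraticVertex := by
    rw [eval_eq_vertex_form hB x, ne_eq, add_eq_right]
    exact mul_ne_zero (coeff_two_ne_zero_of_natDegree_eq_two hB)
      (pow_ne_zero 2 (sub_ne_zero.mpr hxv))
  rcases hx with hx | hx <;>
    rcases eval_quadraticVertex_mem_of_derivative_dvd hB hdvd with hv | hv <;>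
    simp_all

theorem two_mul_eq_add_of_eval_mem (hB : B.natDegree = 2) (hdvd : derivative B ∣ B * (B - 1))
    {x y z : F} (hxy : x ≠ y) (hxz : x ≠ z) (hyz : y ≠ z) (hx : B.eval x ∈ ({0, 1} : Set F))
    (hy : B.eval y ∈ ({0, 1} : Set F)) (hz : B.eval z ∈ ({0, 1} : Set F)) :
    2 * x = y + z ∨ 2 * y = x + z ∨ 2 * z = x + y := by
  set v := B.quadraticVertex
  have hsymm {p q : F} (hpq : p ≠ q) (hp : B.eval p ∈ ({0, 1} : Set F))
      (hq : B.eval q ∈ ({0, 1} : Set F)) (hpv : p ≠ v) (hqv : q ≠ v) : p + q = 2 * v :=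
    add_eq_two_mul_quadraticVertex_of_eval_eq hB hpq <| by
      rw [eval_eq_one_sub_eval_quadraticVertex hB hdvd hp hpv,
        eval_eq_one_sub_eval_quadraticVertex hB hdvd hq hqv]
  by_cases hxv : x = v
  · left
    rw [hsymm hyz hy hz (hxv ▸ hxy.symm) (hxv ▸ hxz.symm), hxv]
  by_cases hyv : y = v
  · right; left
    rw [hsymm hxz hx hz hxv (hyv ▸ hyz.symm), hyv]
  have hxy_sum := hsymm hxy hx hy hxv hyv
  by_cases hzv : z = v
  · right; right
    rw [hxy_sum, hzv]
  exact absurd (by linear_combination hxy_sum - hsymm hxz hx hz hxv hzv : y = z) hyz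

end Quadratic

end Polynomial

/-- Over a field of characteristic zero, no Belyi polynomial of degree exactly `2`
maps `4` into `{0, 1}`; hence the Belyi height of `4` is not `2`. -/
theorem no_quadratic_belyi_at_four {F : Type*} [Field F] [CharZero F]
    (B : F[X]) (hB : IsBelyi B) (hdeg : B.natDegree = 2) :
    B.eval 4 ∉ ({0, 1} : Set F) := by
  obtain ⟨h0, h1, hdvd⟩ := hB
  intro h4
  rcases two_mul_eq_add_of_eval_mem hdeg hdvd (by norm_num) (by norm_num) (by norm_num) h0 h1 h4
    with h | h | h <;> norm_num at h
end

section
/- Let F be an algebraically closed field of characteristic zero and let B ∈ F[X] be a nonconstant polynomial. Then B' divides B·(B−1) in F[X] if and only if every critical value of B lies in {0,1}, i.e. for every x ∈ F with B'(x) = 0 one has B(x) = 0 or B(x) = 1. -/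
open Polynomial

/-- Over an algebraically closed field of characteristic zero, for a nonconstant
polynomial `B`, the derivative `B'` divides `B (B - 1)` if and only if every critical
value of `B` lies in `{0, 1}`. -/
theorem derivative_dvd_iff_critical_values {F : Type*} [Field F] [IsAlgClosed F] [CharZero F]
    (B : F[X]) (hB : 0 < B.natDegree) :
    B.derivative ∣ B * (B - 1) ↔
      ∀ x : F, B.derivative.eval x = 0 → B.eval x = 0 ∨ B.eval x = 1 := by
  have hB0 : B ≠ 0 := fun h => by simp [h] at hB
  have hB1 : B - 1 ≠ 0 := fun h => by
    have : B = 1 := by linear_combination (norm := ring_nf) h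
    simp [this] at hB
  have hd : B.derivative ≠ 0 := by
    intro h
    have := natDegree_eq_zero_of_derivative_eq_zero h
    omega
  have hprod : B * (B - 1) ≠ 0 := mul_ne_zero hB0 hB1
  constructor
  · rintro ⟨r, hr⟩ x hx
    have := congr_arg (eval x) hr
    simp [hx] at this
    rcases this with h | h
    · exact Or.inl h
    · exact Or.inr (sub_eq_zero.mp h)
  · intro h
    classical
    rw [Splits.dvd_iff_roots_le_roots (IsAlgClosed.splits B.derivative) hd hprod,
      Multiset.le_iff_count]
    intro a
    simp only [count_roots, rootMultiplicity_mul hprod]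
    by_cases ha : B.derivative.eval a = 0
    · rcases h a ha with hB0a | hB1a
      · have h1 : rootMultiplicity a B.derivative = rootMultiplicity a B - 1 :=
          derivative_rootMultiplicity_of_root hB0a
        have h2 : rootMultiplicity a B - 1 ≤ rootMultiplicity a B := Nat.sub_le _ _
        omega
      · have hroot : (B - 1).IsRoot a := by simp [IsRoot, hB1a]
        have h1 : rootMultiplicity a (B - 1).derivative = rootMultiplicity a (B - 1) - 1 :=
          derivative_rootMultiplicity_of_root hroot
        rw [show (B - 1).derivative = B.derivative by simp] at h1
        have h2 : rootMultiplicity a (B - 1) - 1 ≤ rootMultiplicity a (B - 1) := Nat.sub_le _ _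
        omega
    · rw [rootMultiplicity_eq_zero ha]
      exact Nat.zero_le _
end
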